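/- arXiv:1903.01939 — 8 statements merged into one kernel-verified Lean document; each statement's English description precedes it below -/
import Mathlib

section
/- Let n ≥ 1, let K ⊆ ℝⁿ be a compact set that is stable under the coordinate-permutation action of Sₙ, and let f : K → ℝ be continuous and Sₙ-invariant (f(σ·x) = f(x) for every σ ∈ Sₙ and x ∈ K). Then there exists a continuous function ρ : ℝ^(n+1) → ℝ such that f(x₁,…,xₙ) = ρ(∑_{i=1}^n φ(x_i)) for all x ∈ K, where φ : ℝ → ℝ^(n+1) is defined by φ(t) = (1, t, t², …, tⁿ). -/
section Aux
open Finset MvPolynomial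


private lemma perm_of_multiset_eq {n : ℕ} {x y : Fin n → ℝ}
    (h : Multiset.map x Finset.univ.val = Multiset.map y Finset.univ.val) :
    ∃ σ : Equiv.Perm (Fin n), x ∘ σ = y := by
  have hl : (List.ofFn x).Perm (List.ofFn y) := by
    rw [← Multiset.coe_eq_coe]
    simpa [Fin.univ_val_map] using h
  have h1 : Monotone (x ∘ Tuple.sort x) := Tuple.monotone_sort x
  have h2 : Monotone (y ∘ Tuple.sort y) := Tuple.monotone_sort y
  have hperm : (List.ofFn (x ∘ Tuple.sort x)).Perm (List.ofFn (y ∘ Tuple.sort y)) :=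
    (((Tuple.sort x).ofFn_comp_perm x).trans hl).trans ((Tuple.sort y).ofFn_comp_perm y).symm
  have hs : x ∘ Tuple.sort x = y ∘ Tuple.sort y :=
    List.ofFn_injective (List.Perm.eq_of_sortedLE h1.sortedLE_ofFn h2.sortedLE_ofFn hperm)
  refine ⟨(Tuple.sort y)⁻¹.trans (Tuple.sort x), funext fun i => ?_⟩
  have := congrFun hs ((Tuple.sort y)⁻¹ i)
  simpa using this



private lemma multiset_eq_of_psum_eq {n : ℕ} {x y : Fin n → ℝ}
    (h : ∀ k ≤ n, ∑ i, x i ^ k = ∑ i, y i ^ k) :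
    Multiset.map x Finset.univ.val = Multiset.map y Finset.univ.val := by
  have hpsum : ∀ k ≤ n, eval x (psum (Fin n) ℝ k) = eval y (psum (Fin n) ℝ k) := by
    intro k hk; simpa [psum] using h k hk
  have hesymm : ∀ k, k ≤ n → eval x (esymm (Fin n) ℝ k) = eval y (esymm (Fin n) ℝ k) := by
    intro k
    induction k using Nat.strong_induction_on with
    | _ k ih =>
      intro hk
      rcases Nat.eq_zero_or_pos k with rfl | hk0
      · simp [esymm_zero]
      · have hmx := congrArg (eval x) (mul_esymm_eq_sum (Fin n) ℝ k)
        have hmy := congrArg (eval y) (mul_esymm_eq_sum (Fin n) ℝ k)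
        simp only [map_mul, map_sum, map_pow, map_neg, map_one, map_natCast] at hmx hmy
        have hsum : ∑ a ∈ (antidiagonal k).filter (fun a => a.1 < k),
              (-1 : ℝ) ^ a.1 * eval x (esymm (Fin n) ℝ a.1) * eval x (psum (Fin n) ℝ a.2)
            = ∑ a ∈ (antidiagonal k).filter (fun a => a.1 < k),
              (-1 : ℝ) ^ a.1 * eval y (esymm (Fin n) ℝ a.1) * eval y (psum (Fin n) ℝ a.2) := by
          refine Finset.sum_congr rfl fun a ha => ?_
          simp only [mem_filter, Finset.HasAntidiagonal.mem_antidiagonal] at ha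
          rw [ih a.1 (ha.2) (le_trans (le_of_lt ha.2) hk),
            hpsum a.2 (le_trans (by omega) hk)]
        have hknz : (k : ℝ) ≠ 0 := Nat.cast_ne_zero.mpr (Nat.pos_iff_ne_zero.mp hk0)
        apply mul_left_cancel₀ hknz
        rw [hmx, hmy, hsum]
  -- translate to multiset esymm
  have hm : ∀ k ≤ n, (Multiset.map x Finset.univ.val).esymm k
      = (Multiset.map y Finset.univ.val).esymm k := by
    intro k hk
    have hx := aeval_esymm_eq_multiset_esymm (Fin n) ℝ k x
    have hy := aeval_esymm_eq_multiset_esymm (Fin n) ℝ k y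
    rw [← hx, ← hy]
    have : ∀ z : Fin n → ℝ, aeval z (esymm (Fin n) ℝ k) = eval z (esymm (Fin n) ℝ k) := by
      intro z
      rw [← coe_aeval_eq_eval]; rfl
    rw [this x, this y]
    exact hesymm k hk
  -- equal characteristic polynomials
  set s : Multiset ℝ := Multiset.map x Finset.univ.val with hs
  set t : Multiset ℝ := Multiset.map y Finset.univ.val with ht
  have hcs : Multiset.card s = n := by simp [hs]
  have hct : Multiset.card t = n := by simp [ht]
  have hP : (s.map fun a => Polynomial.X - Polynomial.C a).prod
      = (t.map fun a => Polynomial.X - Polynomial.C a).prod := by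
    apply Polynomial.ext
    intro k
    by_cases hk : k ≤ n
    · rw [Multiset.prod_X_sub_C_coeff s (hcs ▸ hk), Multiset.prod_X_sub_C_coeff t (hct ▸ hk),
        hcs, hct, hm (n - k) (Nat.sub_le n k)]
    · push_neg at hk
      rw [Polynomial.coeff_eq_zero_of_natDegree_lt, Polynomial.coeff_eq_zero_of_natDegree_lt]
      · rw [Polynomial.natDegree_multiset_prod_X_sub_C_eq_card, hct]; exact hk
      · rw [Polynomial.natDegree_multiset_prod_X_sub_C_eq_card, hcs]; exact hk
  have := congrArg Polynomial.roots hP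
  rwa [Polynomial.roots_multiset_prod_X_sub_C, Polynomial.roots_multiset_prod_X_sub_C] at this

end Aux


/-- Kolmogorov–Arnold representation for `Sₙ`-invariant functions.
`Sₙ = Equiv.Perm (Fin n)` acts on `ℝⁿ = Fin n → ℝ` by `(σ · x) i = x (σ⁻¹ i)`.
If `K ⊆ ℝⁿ` is compact and stable under this action and `f : K → ℝ` is continuous
and `Sₙ`-invariant, then `f x = ρ (∑ i, φ (x i))` on `K` for some continuous
`ρ : ℝ^(n+1) → ℝ`, where `φ t = (1, t, t², …, tⁿ)`. -/
theorem stmt0 (n : ℕ) (hn : 1 ≤ n) (K : Set (Fin n → ℝ)) (hK : IsCompact K)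
    (hstab : ∀ σ : Equiv.Perm (Fin n), ∀ x ∈ K, (fun i => x (σ⁻¹ i)) ∈ K)
    (f : (Fin n → ℝ) → ℝ) (hf : ContinuousOn f K)
    (hinv : ∀ σ : Equiv.Perm (Fin n), ∀ x ∈ K, f (fun i => x (σ⁻¹ i)) = f x) :
    ∃ ρ : (Fin (n + 1) → ℝ) → ℝ, Continuous ρ ∧
      ∀ x ∈ K, f x = ρ (∑ i : Fin n, fun j : Fin (n + 1) => (x i) ^ (j : ℕ)) := by
  classical
  set Φ : (Fin n → ℝ) → (Fin (n + 1) → ℝ) :=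
    fun x => ∑ i : Fin n, fun j : Fin (n + 1) => (x i) ^ (j : ℕ) with hΦdef
  have hΦcont : Continuous Φ := by
    apply continuous_finset_sum
    intro i _
    exact continuous_pi fun j => (continuous_apply i).pow _
  have key : ∀ x ∈ K, ∀ y ∈ K, Φ x = Φ y → f x = f y := by
    intro x hx y hy hxy
    have h : ∀ k ≤ n, ∑ i, x i ^ k = ∑ i, y i ^ k := by
      intro k hk
      have := congrFun hxy ⟨k, Nat.lt_succ_of_le hk⟩
      simpa [hΦdef, Finset.sum_apply] using this
    obtain ⟨σ, hσ⟩ := perm_of_multiset_eq (multiset_eq_of_psum_eq h)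
    have hi := hinv σ⁻¹ x hx
    simp only [inv_inv] at hi
    rw [← hi]
    congr 1
  set L : Set (Fin (n + 1) → ℝ) := Φ '' K with hLdef
  have hLco : IsCompact L := hK.image hΦcont
  haveI : CompactSpace K := isCompact_iff_compactSpace.mp hK
  set q : K → L := fun z => ⟨Φ z, ⟨z.1, z.2, rfl⟩⟩ with hqdef
  have hqc : Continuous q := Continuous.subtype_mk (hΦcont.comp continuous_subtype_val) _
  have hqs : Function.Surjective q := by
    rintro ⟨w, z, hz, rfl⟩
    exact ⟨⟨z, hz⟩, rfl⟩
  have hq : Topology.IsQuotientMap q := hqc.isClosedMap.isQuotientMap hqc hqs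
  set g : L → ℝ := fun w => f w.2.choose with hgdef
  have hgq : ∀ z : K, g (q z) = f z := by
    intro z
    obtain ⟨hmem, heq⟩ := (q z).2.choose_spec
    exact key _ hmem _ z.2 heq
  have hgc : Continuous g := by
    rw [hq.continuous_iff]
    have : (g ∘ q) = fun z : K => f z := funext hgq
    rw [this]
    exact hf.restrict
  obtain ⟨ρC, hρ⟩ := ContinuousMap.exists_restrict_eq hLco.isClosed (⟨g, hgc⟩ : C(L, ℝ))
  refine ⟨ρC, ρC.continuous, fun x hx => ?_⟩
  have h1 : ρC (Φ x) = g ⟨Φ x, ⟨x, hx, rfl⟩⟩ := ContinuousMap.congr_fun hρ ⟨Φ x, ⟨x, hx, rfl⟩⟩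
  have h2 : g ⟨Φ x, ⟨x, hx, rfl⟩⟩ = f x := hgq ⟨x, hx⟩
  rw [← h1] at h2
  exact h2.symm
end

section
/- Let n ≥ 2, let K ⊆ ℝⁿ be a compact set stable under the coordinate-permutation action of Stab(1), and let f : K → ℝ be continuous and Stab(1)-invariant (f(σ·x) = f(x) for every σ ∈ Stab(1) and x ∈ K). Then there exists a continuous function ρ : ℝ^(n+1) → ℝ such that f(x₁,…,xₙ) = ρ(x₁, ∑_{i=2}^n ψ(x_i)) for all x ∈ K, where ψ : ℝ → ℝⁿ is defined by ψ(t) = (1, t, t², …, t^(n-1)). -/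
open Finset in
private lemma aux_esymm_eq {m : ℕ} (a b : Fin m → ℝ)
    (h : ∀ k ≤ m, ∑ j, a j ^ k = ∑ j, b j ^ k) :
    ∀ k ≤ m, MvPolynomial.aeval a (MvPolynomial.esymm (Fin m) ℝ k)
      = MvPolynomial.aeval b (MvPolynomial.esymm (Fin m) ℝ k) := by
  have hpsum : ∀ c : Fin m → ℝ, ∀ k, MvPolynomial.aeval c (MvPolynomial.psum (Fin m) ℝ k)
      = ∑ j, c j ^ k := by
    intro c k
    simp [MvPolynomial.psum, map_sum]
  intro k
  induction k using Nat.strong_induction_on with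
  | _ k ih =>
    intro hk
    rcases Nat.eq_zero_or_pos k with rfl | hk0
    · simp [MvPolynomial.esymm_zero]
    have key := MvPolynomial.mul_esymm_eq_sum (Fin m) ℝ k
    have hA := congrArg (MvPolynomial.aeval a) key
    have hB := congrArg (MvPolynomial.aeval b) key
    simp only [map_mul, map_sum, map_pow, map_neg, map_one, map_natCast] at hA hB
    have hRHS : ∑ p ∈ antidiagonal k with p.1 < k,
        MvPolynomial.aeval a ((-1) ^ p.1 * MvPolynomial.esymm (Fin m) ℝ p.1
          * MvPolynomial.psum (Fin m) ℝ p.2)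
        = ∑ p ∈ antidiagonal k with p.1 < k,
        MvPolynomial.aeval b ((-1) ^ p.1 * MvPolynomial.esymm (Fin m) ℝ p.1
          * MvPolynomial.psum (Fin m) ℝ p.2) := by
      refine Finset.sum_congr rfl ?_
      intro p hp
      rw [Finset.mem_filter, Finset.HasAntidiagonal.mem_antidiagonal] at hp
      obtain ⟨hpk, hplt⟩ := hp
      have h1 : p.1 ≤ m := le_trans (le_of_lt hplt) hk
      have h2 : p.2 ≤ m := le_trans (by omega) hk
      simp only [map_mul, map_pow, map_neg, map_one, hpsum, ih p.1 hplt h1, h p.2 h2]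
    simp only [map_mul, map_pow, map_neg, map_one] at hRHS
    have : (k : ℝ) * MvPolynomial.aeval a (MvPolynomial.esymm (Fin m) ℝ k)
        = (k : ℝ) * MvPolynomial.aeval b (MvPolynomial.esymm (Fin m) ℝ k) := by
      rw [hA, hB, hRHS]
    exact mul_left_cancel₀ (by exact_mod_cast hk0.ne') this

open Finset Polynomial in
private lemma aux_multiset_eq {m : ℕ} (a b : Fin m → ℝ)
    (h : ∀ k ≤ m, ∑ j, a j ^ k = ∑ j, b j ^ k) :
    Multiset.map a Finset.univ.val = Multiset.map b Finset.univ.val := by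
  set s := Multiset.map a Finset.univ.val with hs
  set t := Multiset.map b Finset.univ.val with ht
  have hcards : Multiset.card s = m := by simp [hs]
  have hcardt : Multiset.card t = m := by simp [ht]
  have hesymm : ∀ k ≤ m, s.esymm k = t.esymm k := by
    intro k hk
    have := aux_esymm_eq a b h k hk
    rwa [MvPolynomial.aeval_esymm_eq_multiset_esymm, MvPolynomial.aeval_esymm_eq_multiset_esymm]
      at this
  have hP : (s.map fun r => X - C r).prod = (t.map fun r => X - C r).prod := by
    have hds : ((s.map fun r => X - C r).prod).natDegree = m := by
      rw [Polynomial.natDegree_multiset_prod_X_sub_C_eq_card, hcards]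
    have hdt : ((t.map fun r => X - C r).prod).natDegree = m := by
      rw [Polynomial.natDegree_multiset_prod_X_sub_C_eq_card, hcardt]
    ext k
    rcases le_or_gt k m with hkm | hkm
    · rw [Multiset.prod_X_sub_C_coeff s (by rw [hcards]; exact hkm),
        Multiset.prod_X_sub_C_coeff t (by rw [hcardt]; exact hkm), hcards, hcardt,
        hesymm (m - k) (Nat.sub_le _ _)]
    · rw [Polynomial.coeff_eq_zero_of_natDegree_lt (by rw [hds]; exact hkm),
        Polynomial.coeff_eq_zero_of_natDegree_lt (by rw [hdt]; exact hkm)]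
  have := congrArg Polynomial.roots hP
  rwa [Polynomial.roots_multiset_prod_X_sub_C, Polynomial.roots_multiset_prod_X_sub_C] at this

open Finset in
private lemma aux_exists_perm {m : ℕ} (a b : Fin m → ℝ)
    (h : Multiset.map a Finset.univ.val = Multiset.map b Finset.univ.val) :
    ∃ π : Equiv.Perm (Fin m), b = a ∘ π := by
  have hperm : (List.ofFn a).Perm (List.ofFn b) := by
    rw [List.ofFn_eq_map, List.ofFn_eq_map, ← Multiset.coe_eq_coe]
    simpa [← Multiset.map_coe, Fin.univ_def] using h
  have h1 : List.ofFn (a ∘ Tuple.sort a) = List.ofFn (b ∘ Tuple.sort b) := by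
    refine List.Perm.eq_of_sortedLE (Tuple.monotone_sort a).sortedLE_ofFn
      (Tuple.monotone_sort b).sortedLE_ofFn ?_
    exact (((Tuple.sort a).ofFn_comp_perm a).trans hperm).trans
      ((Tuple.sort b).ofFn_comp_perm b).symm
  have h2 : a ∘ Tuple.sort a = b ∘ Tuple.sort b := List.ofFn_injective h1
  refine ⟨((Tuple.sort b)⁻¹ : Equiv.Perm (Fin m)).trans (Tuple.sort a), ?_⟩
  funext j
  have := congrFun h2 ((Tuple.sort b)⁻¹ j)
  simpa using this.symm

open Finset in
private lemma aux_fiber {m : ℕ} (x y : Fin (m + 1) → ℝ) (h0 : x 0 = y 0)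
    (hps : ∀ k ≤ m, ∑ i ∈ Finset.univ.erase (0 : Fin (m + 1)), x i ^ k
      = ∑ i ∈ Finset.univ.erase (0 : Fin (m + 1)), y i ^ k) :
    ∃ σ : Equiv.Perm (Fin (m + 1)), σ 0 = 0 ∧ (fun i => x (σ⁻¹ i)) = y := by
  have hsum : ∀ (c : Fin (m + 1) → ℝ) (k : ℕ),
      ∑ i ∈ Finset.univ.erase (0 : Fin (m + 1)), c i ^ k = ∑ j : Fin m, (c j.succ) ^ k := by
    intro c k
    have h1 : ∑ i ∈ Finset.univ.erase (0 : Fin (m + 1)), c i ^ k + c 0 ^ k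
        = ∑ i : Fin (m + 1), c i ^ k := Finset.sum_erase_add _ _ (Finset.mem_univ _)
    have h2 : ∑ i : Fin (m + 1), c i ^ k = c 0 ^ k + ∑ j : Fin m, (c j.succ) ^ k :=
      Fin.sum_univ_succ _
    linarith
  obtain ⟨π, hπ⟩ := aux_exists_perm (fun j => x j.succ) (fun j => y j.succ) <| by
    apply aux_multiset_eq
    intro k hk
    have := hps k hk
    rwa [hsum, hsum] at this
  refine ⟨(Equiv.Perm.decomposeFin.symm (0, π))⁻¹, ?_, ?_⟩
  · have : Equiv.Perm.decomposeFin.symm (0, π) 0 = 0 :=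
      Equiv.Perm.decomposeFin_symm_apply_zero 0 π
    nth_rewrite 2 [← this]
    exact Equiv.symm_apply_apply _ _
  · funext i
    simp only [inv_inv]
    cases i using Fin.cases with
    | zero => simpa [Equiv.Perm.decomposeFin_symm_apply_zero] using h0
    | succ j =>
      have : Equiv.Perm.decomposeFin.symm (0, π) j.succ = (π j).succ := by
        simp [Equiv.Perm.decomposeFin_symm_apply_succ]
      rw [this]
      exact (congrFun hπ j).symm

/-- representation of `Stab(1)`-invariant functions.
Indices are `Fin n`, with `0 : Fin n` playing the role of the index "1"; the
stabilizer `Stab(1)` consists of the permutations `σ` with `σ 0 = 0`.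
If `K ⊆ ℝⁿ` is compact and stable under the `Stab(1)`-action and `f : K → ℝ` is
continuous and `Stab(1)`-invariant, then `f x = ρ (x₁, ∑_{i ≥ 2} ψ (x i))` on `K`
for some continuous `ρ : ℝ^(n+1) → ℝ`, where `ψ t = (1, t, t², …, t^(n-1))`. -/
theorem stmt1 (n : ℕ) [NeZero n] (hn : 2 ≤ n) (K : Set (Fin n → ℝ)) (hK : IsCompact K)
    (hstab : ∀ σ : Equiv.Perm (Fin n), σ 0 = 0 → ∀ x ∈ K, (fun i => x (σ⁻¹ i)) ∈ K)
    (f : (Fin n → ℝ) → ℝ) (hf : ContinuousOn f K)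
    (hinv : ∀ σ : Equiv.Perm (Fin n), σ 0 = 0 → ∀ x ∈ K, f (fun i => x (σ⁻¹ i)) = f x) :
    ∃ ρ : (Fin (n + 1) → ℝ) → ℝ, Continuous ρ ∧
      ∀ x ∈ K, f x = ρ (Fin.cons (x 0)
        (∑ i ∈ Finset.univ.erase (0 : Fin n), fun j : Fin n => (x i) ^ (j : ℕ))) := by
  obtain ⟨m, rfl⟩ : ∃ m, n = m + 1 := ⟨n - 1, (Nat.succ_pred_eq_of_pos (NeZero.pos n)).symm⟩
  set Φ : (Fin (m + 1) → ℝ) → (Fin (m + 1 + 1) → ℝ) := fun x => Fin.cons (x 0)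
    (∑ i ∈ Finset.univ.erase (0 : Fin (m + 1)), fun j : Fin (m + 1) => (x i) ^ (j : ℕ)) with hΦdef
  have hΦcont : Continuous Φ := by
    apply continuous_pi
    intro i
    cases i using Fin.cases with
    | zero =>
      simp only [hΦdef, Fin.cons_zero]
      exact continuous_apply 0
    | succ j =>
      simp only [hΦdef, Fin.cons_succ, Finset.sum_apply]
      exact continuous_finset_sum _ fun i _ => (continuous_apply i).pow _
  have key : ∀ x ∈ K, ∀ y ∈ K, Φ x = Φ y → f x = f y := by
    intro x hx y hy hxy
    have h0 : x 0 = y 0 := by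
      have := congrFun hxy 0
      simpa [hΦdef] using this
    have hps : ∀ k ≤ m, ∑ i ∈ Finset.univ.erase (0 : Fin (m + 1)), x i ^ k
        = ∑ i ∈ Finset.univ.erase (0 : Fin (m + 1)), y i ^ k := by
      intro k hk
      have := congrFun hxy (Fin.succ ⟨k, Nat.lt_succ_of_le hk⟩)
      simp only [hΦdef, Fin.cons_succ, Finset.sum_apply] at this
      exact this
    obtain ⟨σ, hσ0, hσ⟩ := aux_fiber x y h0 hps
    rw [← hinv σ hσ0 x hx, hσ]
  haveI : CompactSpace K := isCompact_iff_compactSpace.mp hK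
  set T := Φ '' K with hT
  have hTc : IsCompact T := hK.image hΦcont
  let e : K → T := fun x => ⟨Φ x, ⟨x.1, x.2, rfl⟩⟩
  have he : Continuous e := (hΦcont.comp continuous_subtype_val).subtype_mk _
  have hesurj : Function.Surjective e := by
    rintro ⟨t, x, hx, rfl⟩
    exact ⟨⟨x, hx⟩, rfl⟩
  have hq : Topology.IsQuotientMap e := he.isClosedMap.isQuotientMap he hesurj
  let g : T → ℝ := fun t => f (Classical.choose t.2)
  have hgspec : ∀ t : T, Classical.choose t.2 ∈ K ∧ Φ (Classical.choose t.2) = ↑t :=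
    fun t => ⟨(Classical.choose_spec t.2).1, (Classical.choose_spec t.2).2⟩
  have hge : g ∘ e = K.restrict f := by
    funext x
    exact key _ (hgspec (e x)).1 _ x.2 (hgspec (e x)).2
  have hg : Continuous g := hq.continuous_iff.mpr (by rw [hge]; exact hf.restrict)
  obtain ⟨ρ, hρ⟩ := ContinuousMap.exists_restrict_eq hTc.isClosed (⟨g, hg⟩ : C(T, ℝ))
  refine ⟨ρ, ρ.continuous, ?_⟩
  intro x hx
  show f x = ρ (Φ x)
  have hmem : Φ x ∈ T := ⟨x, hx, rfl⟩
  have h1 : ρ (Φ x) = g ⟨Φ x, hmem⟩ := ContinuousMap.congr_fun hρ ⟨Φ x, hmem⟩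
  rw [h1]
  exact (key _ (hgspec ⟨Φ x, hmem⟩).1 _ hx (hgspec ⟨Φ x, hmem⟩).2).symm
end

section
/- Let n ≥ 1. A map F : ℝⁿ → ℝⁿ is Sₙ-equivariant (F(σ·x) = σ·F(x) for all σ ∈ Sₙ, x ∈ ℝⁿ) if and only if there exists a Stab(1)-invariant function f : ℝⁿ → ℝ (i.e. f(σ·x) = f(x) for all σ ∈ Stab(1)) such that for every i ∈ {1,…,n} and every x ∈ ℝⁿ, the i-th component of F satisfies F(x)_i = f((1 i)·x), where (1 i) denotes the transposition of 1 and i (with (1 1) the identity). -/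
/-- correspondence between `Sₙ`-equivariant maps and
`Stab(1)`-invariant functions. Indices are `Fin n`, with `0 : Fin n` playing
the role of the index "1". A map `F : ℝⁿ → ℝⁿ` is `Sₙ`-equivariant iff there is
a `Stab(1)`-invariant `f : ℝⁿ → ℝ` with `F(x)_i = f((1 i)·x)` for all `i, x`,
where `(1 i)` is the transposition `Equiv.swap 0 i` (the identity for `i = 0`). -/
theorem stmt2 (n : ℕ) [NeZero n] (F : (Fin n → ℝ) → (Fin n → ℝ)) :
    (∀ (σ : Equiv.Perm (Fin n)) (x : Fin n → ℝ),
        F (fun i => x (σ⁻¹ i)) = fun i => F x (σ⁻¹ i)) ↔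
    (∃ f : (Fin n → ℝ) → ℝ,
      (∀ σ : Equiv.Perm (Fin n), σ 0 = 0 → ∀ x : Fin n → ℝ,
        f (fun i => x (σ⁻¹ i)) = f x) ∧
      (∀ (i : Fin n) (x : Fin n → ℝ),
        F x i = f (fun j => x ((Equiv.swap (0 : Fin n) i)⁻¹ j)))) := by
  constructor
  · intro hF
    refine ⟨fun x => F x 0, ?_, ?_⟩
    · intro σ hσ x
      have h1 := congrFun (hF σ x) 0
      have h2 : σ⁻¹ 0 = 0 := by
        conv_lhs => rw [← hσ]
        simp
      simpa [h2] using h1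
    · intro i x
      have h1 := congrFun (hF (Equiv.swap (0 : Fin n) i) x) 0
      show F x i = F (fun j => x ((Equiv.swap (0 : Fin n) i)⁻¹ j)) 0
      rw [h1]
      simp
  · rintro ⟨f, hinv, hform⟩
    intro σ x
    funext i
    rw [hform i, hform (σ⁻¹ i)]
    set π : Equiv.Perm (Fin n) :=
      (Equiv.swap (0 : Fin n) (σ⁻¹ i)).trans (σ.trans (Equiv.swap (0 : Fin n) i)) with hπ
    have hπ0 : π 0 = 0 := by
      simp [hπ, Equiv.swap_apply_left]
    have key := hinv π hπ0 (fun j => x ((Equiv.swap (0 : Fin n) (σ⁻¹ i)) j))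
    have hlhs : (fun j => (fun j => x ((Equiv.swap (0 : Fin n) (σ⁻¹ i)) j)) (π⁻¹ j))
        = (fun j => x (σ⁻¹ ((Equiv.swap (0 : Fin n) i)⁻¹ j))) := by
      funext j
      simp [hπ, Equiv.Perm.inv_def, Equiv.symm_trans_apply, Equiv.swap_apply_self]
    rw [hlhs] at key
    have hswapinv : ∀ (a : Fin n) (j : Fin n),
        (Equiv.swap (0 : Fin n) a)⁻¹ j = Equiv.swap (0 : Fin n) a j := by
      intro a j; simp
    simp only [hswapinv] at *
    exact key
end

section
/- Let n ≥ 1 and let l : ℝⁿ → ℝⁿ be a linear map that is Stab(1)-equivariant, i.e. l(σ·x) = σ·l(x) for all σ ∈ Stab(1) and x ∈ ℝⁿ. Define g : ℝⁿ → (ℝⁿ)ⁿ by g(x)_i = ReLU(l((1 i)·x)), where ReLU is applied componentwise. Then g is Sₙ-equivariant for the ∗-action on (ℝⁿ)ⁿ: g(σ·x) = σ ∗ g(x) for all σ ∈ Sₙ and x ∈ ℝⁿ, where (σ ∗ X)_i = σ̃_i · X_{σ⁻¹(i)} and σ̃_i = (1 i) ∘ σ ∘ (1 σ⁻¹(i)).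 -/
/-- For `σ ∈ Sₙ` and an index `j` (indices are `Fin n`, `0` playing the role of
"1"), `ptilde σ j = (1 j) ∘ σ ∘ (1 σ⁻¹(j))`, an element of `Stab(1)`. -/
def ptilde {n : ℕ} [NeZero n] (σ : Equiv.Perm (Fin n)) (j : Fin n) :
    Equiv.Perm (Fin n) :=
  Equiv.swap (0 : Fin n) j * σ * Equiv.swap (0 : Fin n) (σ⁻¹ j)

/-- The `∗`-action of `Sₙ` on `(ℝⁿ)ⁿ`: `(σ ∗ X)_j = σ̃_j · X_{σ⁻¹ j}`, where
`·` is the coordinate-permutation action `(ρ · v) k = v (ρ⁻¹ k)`. -/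
def pstar {n : ℕ} [NeZero n] (σ : Equiv.Perm (Fin n)) (X : Fin n → Fin n → ℝ) :
    Fin n → Fin n → ℝ :=
  fun j k => X (σ⁻¹ j) ((ptilde σ j)⁻¹ k)

/-- Let `l : ℝⁿ → ℝⁿ` be a linear map that is
`Stab(1)`-equivariant for the coordinate-permutation action.  Define
`g : ℝⁿ → (ℝⁿ)ⁿ` by `g(x)_i = ReLU(l((1 i) · x))` (`ReLU` componentwise).
Then `g` is `Sₙ`-equivariant for the `∗`-action: `g (σ · x) = σ ∗ g x`. -/
theorem stmt9 (n : ℕ) [NeZero n] (l : (Fin n → ℝ) →ₗ[ℝ] (Fin n → ℝ))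
    (hl : ∀ σ : Equiv.Perm (Fin n), σ 0 = 0 → ∀ x : Fin n → ℝ,
      l (fun i => x (σ⁻¹ i)) = fun i => l x (σ⁻¹ i))
    (g : (Fin n → ℝ) → Fin n → Fin n → ℝ)
    (hg : ∀ (x : Fin n → ℝ) (i j : Fin n),
      g x i j = max (l (fun k => x ((Equiv.swap (0 : Fin n) i)⁻¹ k)) j) 0) :
    ∀ (σ : Equiv.Perm (Fin n)) (x : Fin n → ℝ),
      g (fun i => x (σ⁻¹ i)) = pstar σ (g x) := by
  intro σ x
  funext j k
  have hτ0 : (ptilde σ j) 0 = 0 := by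
    simp [ptilde, Equiv.Perm.mul_apply]
  have key := hl (ptilde σ j) hτ0 (fun m => x (Equiv.swap (0 : Fin n) (σ⁻¹ j) m))
  have harg : (fun i => (fun m => x (Equiv.swap (0 : Fin n) (σ⁻¹ j) m)) ((ptilde σ j)⁻¹ i))
      = fun i => (fun m => x (σ⁻¹ m)) ((Equiv.swap (0 : Fin n) j)⁻¹ i) := by
    funext i
    simp [ptilde, Equiv.Perm.mul_apply, Equiv.swap_apply_self]
  rw [hg]
  simp only [pstar]
  rw [hg]
  rw [← harg, key]
  simp
end

section
/- Let n ≥ 2 and let V be a real n × n matrix such that the map x ↦ ReLU(Vx) from ℝⁿ to ℝⁿ is Sₙ-equivariant, i.e. ReLU(V(σ·x)) = σ·ReLU(Vx) for every σ ∈ Sₙ and x ∈ ℝⁿ. Then there exist real numbers λ and γ such that V = λ·Iₙ + γ·𝟙𝟙ᵀ, where Iₙ is the n × n identity matrix and 𝟙𝟙ᵀ is the n × n all-ones matrix. -/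
/-- Let `n ≥ 2` and `V` a real `n × n` matrix such that
`x ↦ ReLU (V x)` is `Sₙ`-equivariant for the coordinate-permutation action
`(σ · x) i = x (σ⁻¹ i)`.  Then `V = λ Iₙ + γ 𝟙𝟙ᵀ` for some reals `λ, γ`. -/
theorem stmt11 (n : ℕ) (hn : 2 ≤ n) (V : Matrix (Fin n) (Fin n) ℝ)
    (h : ∀ (σ : Equiv.Perm (Fin n)) (x : Fin n → ℝ),
      (fun i => max (V.mulVec (fun k => x (σ⁻¹ k)) i) 0) =
        fun i => max (V.mulVec x (σ⁻¹ i)) 0) :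
    ∃ lam gam : ℝ,
      V = lam • (1 : Matrix (Fin n) (Fin n) ℝ) +
          gam • Matrix.of (fun _ _ : Fin n => (1 : ℝ)) := by
  -- Step 1: linearity of mulVec + the trick a = max a 0 - max (-a) 0 removes ReLU.
  have h' : ∀ (σ : Equiv.Perm (Fin n)) (x : Fin n → ℝ) (i : Fin n),
      V.mulVec (fun k => x (σ⁻¹ k)) i = V.mulVec x (σ⁻¹ i) := by
    intro σ x i
    have h1 := congrFun (h σ x) i
    have h2 := congrFun (h σ (-x)) i
    have e1 : (fun k => (-x) (σ⁻¹ k)) = -(fun k => x (σ⁻¹ k)) := by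
      funext k; simp
    rw [e1, Matrix.mulVec_neg, Matrix.mulVec_neg] at h2
    simp only [Pi.neg_apply] at h2
    have key : ∀ a b : ℝ, max a 0 = max b 0 → max (-a) 0 = max (-b) 0 → a = b := by
      intro a b hab hab'
      have hc : ∀ c : ℝ, max c 0 - max (-c) 0 = c := by
        intro c
        rcases le_total c 0 with hc | hc
        · rw [max_eq_right hc, max_eq_left (neg_nonneg.mpr hc)]; ring
        · rw [max_eq_left hc, max_eq_right (neg_nonpos.mpr hc)]; ring
      rw [← hc a, ← hc b, hab, hab']
    exact key _ _ h1 h2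
  -- Step 2: V (σ i) (σ j) = V i j
  have h2 : ∀ (σ : Equiv.Perm (Fin n)) (i j : Fin n), V (σ i) (σ j) = V i j := by
    intro σ i j
    have := h' σ (Pi.single j (1:ℝ)) (σ i)
    have e : (fun k => (Pi.single j (1:ℝ) : Fin n → ℝ) (σ⁻¹ k)) = (Pi.single (σ j) (1:ℝ) : Fin n → ℝ) := by
      funext k
      by_cases hk : k = σ j
      · subst hk; rw [(Equiv.Perm.inv_eq_iff_eq (f := σ) (x := σ j) (y := j)).mpr rfl, Pi.single_eq_same, Pi.single_eq_same]
      · rw [Pi.single_eq_of_ne hk, Pi.single_eq_of_ne]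
        intro hc; exact hk (by rw [← hc]; simp)
    rw [e] at this
    simpa [Matrix.mulVec_single] using this
  have h0 : (0 : ℕ) < n := by omega
  set i0 : Fin n := ⟨0, by omega⟩
  set i1 : Fin n := ⟨1, by omega⟩
  have hne : i0 ≠ i1 := by simp [i0, i1, Fin.ext_iff]
  refine ⟨V i0 i0 - V i0 i1, V i0 i1, ?_⟩
  ext i j
  simp only [Matrix.add_apply, Matrix.smul_apply, Matrix.one_apply, Matrix.of_apply,
    smul_eq_mul, mul_one]
  by_cases hij : i = j
  · subst hij
    have := h2 (Equiv.swap i0 i) i0 i0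
    simp [Equiv.swap_apply_left] at this
    rw [this]; ring_nf; simp
  · -- find σ with σ i0 = i, σ i1 = j
    obtain ⟨σ, hσ0, hσ1⟩ : ∃ σ : Equiv.Perm (Fin n), σ i0 = i ∧ σ i1 = j := by
      set τ : Equiv.Perm (Fin n) := Equiv.swap i0 i
      set b : Fin n := τ⁻¹ j
      have hb : b ≠ i0 := by
        intro hb
        apply hij
        have : j = τ i0 := by rw [← hb]; simp [b]
        rw [this]; simp [τ, Equiv.swap_apply_left]
      refine ⟨τ * Equiv.swap i1 b, ?_, ?_⟩
      · simp only [Equiv.Perm.mul_apply]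
        rw [Equiv.swap_apply_of_ne_of_ne hne (Ne.symm hb)]
        simp [τ, Equiv.swap_apply_left]
      · simp only [Equiv.Perm.mul_apply]
        rw [Equiv.swap_apply_left]
        simp [b]
    have := h2 σ i0 i1
    rw [hσ0, hσ1] at this
    rw [this]
    simp [hij, if_neg]
end

section
/- Let n ≥ 2 and M', N' ≥ 1. Consider the diagonal permutation action of Sₙ on (ℝⁿ)^{M'} and on (ℝⁿ)^{N'} given by applying the coordinate-permutation action of σ to every ℝⁿ-block simultaneously. Let W : (ℝⁿ)^{M'} → (ℝⁿ)^{N'} be a linear map such that x ↦ ReLU(Wx) is Sₙ-equivariant for these actions. Then each n × n block V_{ij} of W (i = 1,…,N', j = 1,…,M') has the form V_{ij} = λ_{ij}·Iₙ + γ_{ij}·𝟙𝟙ᵀ for some real numbers λ_{ij}, γ_{ij}; consequently, the set of all such linear maps W is an ℝ-vector subspace of dimension 2·M'·N' of the space of all linear maps (ℝⁿ)^{M'} → (ℝⁿ)^{N'}. -/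
/-- A linear map `W : (ℝⁿ)^{M'} → (ℝⁿ)^{N'}`, identified with a matrix indexed
by pairs (block index, coordinate in block), is ReLU-`Sₙ`-equivariant for the
diagonal permutation actions if `ReLU (W (σ · x)) = σ · ReLU (W x)` for every
`σ ∈ Sₙ`, where `σ` acts on each `ℝⁿ`-block by `(σ · x) (k, i) = x (k, σ⁻¹ i)`
and `ReLU t = max t 0` componentwise. -/
def ReLUEquivariant (n M' N' : ℕ)
    (W : Matrix (Fin N' × Fin n) (Fin M' × Fin n) ℝ) : Prop :=
  ∀ (σ : Equiv.Perm (Fin n)) (x : Fin M' × Fin n → ℝ),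
    (fun p : Fin N' × Fin n => max (W.mulVec (fun q => x (q.1, σ⁻¹ q.2)) p) 0) =
      fun p : Fin N' × Fin n => max (W.mulVec x (p.1, σ⁻¹ p.2)) 0

namespace Stmt12Aux

/-- Entrywise invariance of the blocks. -/
def Pent (n M' N' : ℕ) (W : Matrix (Fin N' × Fin n) (Fin M' × Fin n) ℝ) : Prop :=
  ∀ (σ : Equiv.Perm (Fin n)) (i : Fin N') (j : Fin M') (a b : Fin n),
    W (i, σ a) (j, σ b) = W (i, a) (j, b)

lemma relu_sub (t : ℝ) : max t 0 - max (-t) 0 = t := by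
  rcases le_total t 0 with h | h
  · rw [max_eq_right h, max_eq_left (by linarith)]; ring
  · rw [max_eq_left h, max_eq_right (by linarith)]; ring

lemma relu_equiv_mulVec {n M' N' : ℕ} (W : Matrix (Fin N' × Fin n) (Fin M' × Fin n) ℝ)
    (hW : ReLUEquivariant n M' N' W) (σ : Equiv.Perm (Fin n)) (x : Fin M' × Fin n → ℝ)
    (p : Fin N' × Fin n) :
    W.mulVec (fun q => x (q.1, σ⁻¹ q.2)) p = W.mulVec x (p.1, σ⁻¹ p.2) := by
  have h1 := congrFun (hW σ x) p
  have h2 := congrFun (hW σ (-x)) p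
  have e : (fun q : Fin M' × Fin n => (-x) (q.1, σ⁻¹ q.2))
      = -(fun q : Fin M' × Fin n => x (q.1, σ⁻¹ q.2)) := rfl
  rw [e, Matrix.mulVec_neg, show (-x) = -x from rfl, Matrix.mulVec_neg] at h2
  simp only [Pi.neg_apply] at h2
  have key := relu_sub (W.mulVec (fun q => x (q.1, σ⁻¹ q.2)) p)
  rw [h1, h2, relu_sub] at key
  exact key.symm

lemma relu_equiv_pent {n M' N' : ℕ} (W : Matrix (Fin N' × Fin n) (Fin M' × Fin n) ℝ)
    (hW : ReLUEquivariant n M' N' W) : Pent n M' N' W := by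
  intro σ i j a b
  have h := relu_equiv_mulVec W hW σ (Pi.single (j, b) (1 : ℝ)) (i, σ a)
  have e : (fun q : Fin M' × Fin n =>
        (Pi.single (j, b) (1 : ℝ) : Fin M' × Fin n → ℝ) (q.1, σ⁻¹ q.2))
      = (Pi.single (j, σ b) (1 : ℝ) : Fin M' × Fin n → ℝ) := by
    funext q
    by_cases hq : q = (j, σ b)
    · subst hq
      show (Pi.single (j, b) (1 : ℝ) : Fin M' × Fin n → ℝ) (j, σ⁻¹ (σ b))
          = (Pi.single (j, σ b) (1 : ℝ) : Fin M' × Fin n → ℝ) (j, σ b)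
      rw [Equiv.Perm.coe_inv, Equiv.symm_apply_apply, Pi.single_eq_same, Pi.single_eq_same]
    · have h1 : (q.1, σ⁻¹ q.2) ≠ (j, b) := by
        intro hc
        rcases Prod.ext_iff.mp hc with ⟨hc1, hc2⟩
        exact hq (Prod.ext hc1 (Equiv.Perm.inv_eq_iff_eq.mp hc2))
      show (Pi.single (j, b) (1 : ℝ) : Fin M' × Fin n → ℝ) (q.1, σ⁻¹ q.2)
          = (Pi.single (j, σ b) (1 : ℝ) : Fin M' × Fin n → ℝ) q
      rw [Pi.single_eq_of_ne h1, Pi.single_eq_of_ne hq]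
  rw [e, Matrix.mulVec_single, Matrix.mulVec_single] at h
  simpa using h

lemma two_trans {α : Type*} [DecidableEq α] {a b c d : α} (hab : a ≠ b) (hcd : c ≠ d) :
    ∃ σ : Equiv.Perm α, σ a = c ∧ σ b = d := by
  set σ1 := Equiv.swap a c with hσ1
  have hb'c : σ1 b ≠ c := by
    intro h
    have : σ1 b = σ1 a := by rw [h, hσ1, Equiv.swap_apply_left]
    exact hab (σ1.injective this).symm
  refine ⟨σ1.trans (Equiv.swap (σ1 b) d), ?_, ?_⟩
  · simp only [Equiv.trans_apply, hσ1, Equiv.swap_apply_left]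
    exact Equiv.swap_apply_of_ne_of_ne hb'c.symm hcd
  · simp only [Equiv.trans_apply, Equiv.swap_apply_left]

lemma pent_blockform {n M' N' : ℕ} (hn : 2 ≤ n)
    (W : Matrix (Fin N' × Fin n) (Fin M' × Fin n) ℝ) (hP : Pent n M' N' W)
    (i : Fin N') (j : Fin M') :
    ∃ lam gam : ℝ, ∀ a b : Fin n,
      W (i, a) (j, b) = lam * (if a = b then 1 else 0) + gam := by
  set a0 : Fin n := ⟨0, by omega⟩ with ha0
  set b0 : Fin n := ⟨1, by omega⟩ with hb0
  have hab : a0 ≠ b0 := by simp [ha0, hb0, Fin.ext_iff]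
  refine ⟨W (i, a0) (j, a0) - W (i, a0) (j, b0), W (i, a0) (j, b0), ?_⟩
  intro a b
  by_cases hab' : a = b
  · subst hab'
    have h := hP (Equiv.swap a0 a) i j a0 a0
    rw [Equiv.swap_apply_left] at h
    rw [h]; simp
  · obtain ⟨σ, h1, h2⟩ := two_trans hab hab'
    have h := hP σ i j a0 b0
    rw [h1, h2] at h
    rw [h]; simp [hab']

lemma blockform_pent {n M' N' : ℕ} (W : Matrix (Fin N' × Fin n) (Fin M' × Fin n) ℝ)
    (h : ∀ (i : Fin N') (j : Fin M'), ∃ lam gam : ℝ, ∀ a b : Fin n,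
      W (i, a) (j, b) = lam * (if a = b then 1 else 0) + gam) :
    Pent n M' N' W := by
  intro σ i j a b
  obtain ⟨lam, gam, hf⟩ := h i j
  rw [hf, hf]
  simp [EmbeddingLike.apply_eq_iff_eq]

lemma pent_relu {n M' N' : ℕ} (W : Matrix (Fin N' × Fin n) (Fin M' × Fin n) ℝ)
    (hP : Pent n M' N' W) : ReLUEquivariant n M' N' W := by
  intro σ x
  funext p
  congr 1
  simp only [Matrix.mulVec, dotProduct]
  apply Fintype.sum_equiv (Equiv.prodCongr (Equiv.refl (Fin M')) σ.symm)
  intro q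
  simp only [Equiv.prodCongr_apply, Equiv.coe_refl, Prod.map, id_eq]
  have h := hP σ p.1 q.1 (σ⁻¹ p.2) (σ⁻¹ q.2)
  simp only [Equiv.Perm.coe_inv, Equiv.apply_symm_apply] at h
  have h' : W p q = W (p.1, σ⁻¹ p.2) (q.1, σ⁻¹ q.2) := h
  rw [h']
  rfl

/-- The candidate parameter map. -/
def Phi (n M' N' : ℕ) :
    ((Fin N' × Fin M' × Fin 2) → ℝ) →ₗ[ℝ] Matrix (Fin N' × Fin n) (Fin M' × Fin n) ℝ where
  toFun c := fun p q => c (p.1, q.1, 0) * (if p.2 = q.2 then 1 else 0) + c (p.1, q.1, 1)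
  map_add' c d := by
    funext p q
    simp only [Pi.add_apply, Matrix.add_apply]
    show _ = (c (p.1, q.1, 0) * (if p.2 = q.2 then 1 else 0) + c (p.1, q.1, 1)) +
      (d (p.1, q.1, 0) * (if p.2 = q.2 then 1 else 0) + d (p.1, q.1, 1))
    ring
  map_smul' r c := by
    funext p q
    simp only [Pi.smul_apply, Matrix.smul_apply, smul_eq_mul, RingHom.id_apply]
    show _ = r * (c (p.1, q.1, 0) * (if p.2 = q.2 then 1 else 0) + c (p.1, q.1, 1))
    ring

/-- The submodule of entrywise invariant matrices. -/
def equivSub (n M' N' : ℕ) : Submodule ℝ (Matrix (Fin N' × Fin n) (Fin M' × Fin n) ℝ) where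
  carrier := {W' | Pent n M' N' W'}
  add_mem' := by
    intro a b ha hb σ i j x y
    simp only [Matrix.add_apply, ha σ i j x y, hb σ i j x y]
  zero_mem' := by intro σ i j a b; simp
  smul_mem' := by
    intro c a ha σ i j x y
    simp only [Matrix.smul_apply, ha σ i j x y]

lemma range_phi {n M' N' : ℕ} (hn : 2 ≤ n) :
    LinearMap.range (Phi n M' N') = equivSub n M' N' := by
  apply le_antisymm
  · rintro _ ⟨c, rfl⟩
    refine blockform_pent _ fun i j => ⟨c (i, j, 0), c (i, j, 1), fun a b => rfl⟩
  · intro W hW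
    choose lam gam hf using pent_blockform hn W hW
    refine ⟨fun t => if t.2.2 = 0 then lam t.1 t.2.1 else gam t.1 t.2.1, ?_⟩
    funext p q
    show (if ((0 : Fin 2) = 0) then lam p.1 q.1 else gam p.1 q.1) *
        (if p.2 = q.2 then 1 else 0) +
        (if ((1 : Fin 2) = 0) then lam p.1 q.1 else gam p.1 q.1) = W p q
    rw [show W p q = W (p.1, p.2) (q.1, q.2) from rfl, hf p.1 q.1 p.2 q.2]
    norm_num

lemma phi_inj {n M' N' : ℕ} (hn : 2 ≤ n) :
    Function.Injective (Phi n M' N' :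
      ((Fin N' × Fin M' × Fin 2) → ℝ) → Matrix (Fin N' × Fin n) (Fin M' × Fin n) ℝ) := by
  intro c d h
  set a0 : Fin n := ⟨0, by omega⟩ with ha0
  set b0 : Fin n := ⟨1, by omega⟩ with hb0
  have hab : a0 ≠ b0 := by simp [ha0, hb0, Fin.ext_iff]
  funext t
  obtain ⟨i, j, k⟩ := t
  have h1 := congrFun (congrFun h (i, a0)) (j, a0)
  have h2 := congrFun (congrFun h (i, a0)) (j, b0)
  change c (i, j, 0) * (if a0 = a0 then 1 else 0) + c (i, j, 1) =
    d (i, j, 0) * (if a0 = a0 then 1 else 0) + d (i, j, 1) at h1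
  change c (i, j, 0) * (if a0 = b0 then 1 else 0) + c (i, j, 1) =
    d (i, j, 0) * (if a0 = b0 then 1 else 0) + d (i, j, 1) at h2
  norm_num [Phi, LinearMap.coe_mk, AddHom.coe_mk, hab] at h1 h2
  fin_cases k
  · simpa using by linarith
  · simpa using h2

end Stmt12Aux

open Stmt12Aux in
/-- Let `n ≥ 2`, `M', N' ≥ 1`, and let
`W : (ℝⁿ)^{M'} → (ℝⁿ)^{N'}` be linear with `x ↦ ReLU (W x)` equivariant for the
diagonal `Sₙ`-actions.  Then every `n × n` block `V_{ij}` of `W` is of the form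
`λ_{ij} Iₙ + γ_{ij} 𝟙𝟙ᵀ`; consequently the set of all such `W` is an
`ℝ`-subspace of dimension `2 M' N'`. -/
theorem stmt12 (n M' N' : ℕ) (hn : 2 ≤ n) (hM : 1 ≤ M') (hN : 1 ≤ N')
    (W : Matrix (Fin N' × Fin n) (Fin M' × Fin n) ℝ)
    (hW : ReLUEquivariant n M' N' W) :
    (∀ (i : Fin N') (j : Fin M'), ∃ lam gam : ℝ, ∀ a b : Fin n,
      W (i, a) (j, b) = lam * (if a = b then 1 else 0) + gam) ∧
    (∃ S : Submodule ℝ (Matrix (Fin N' × Fin n) (Fin M' × Fin n) ℝ),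
      (S : Set (Matrix (Fin N' × Fin n) (Fin M' × Fin n) ℝ)) =
        {W' | ReLUEquivariant n M' N' W'} ∧
      Module.finrank ℝ S = 2 * M' * N') := by
  constructor
  · exact pent_blockform hn W (relu_equiv_pent W hW)
  · refine ⟨equivSub n M' N', ?_, ?_⟩
    · ext W'
      exact ⟨fun h => pent_relu W' h, fun h => relu_equiv_pent W' h⟩
    · rw [← range_phi hn, LinearMap.finrank_range_of_inj (phi_inj hn)]
      simp only [Module.finrank_pi, Fintype.card_prod, Fintype.card_fin]
      ring
end

section
/- Let n ≥ 2, let K ⊆ ℝⁿ be a compact set stable under the coordinate-permutation action of Sₙ, and let F : K → ℝⁿ be continuous and Sₙ-equivariant (F(σ·x) = σ·F(x) for all σ ∈ Sₙ and x ∈ K). Then there exists a continuous function ρ : ℝ^(n+1) → ℝ such that for every i ∈ {1,…,n} and every x ∈ K, the i-th component of F satisfies F(x)_i = ρ(x_i, ∑_{j ≠ i} ψ(x_j)), where ψ : ℝ → ℝⁿ is defined by ψ(t) = (1, t, t², …, t^(n-1)). -/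
open Finset MvPolynomial in
lemma newton_eval (m : ℕ) (f : Fin m → ℝ) (k : ℕ) :
    (k : ℝ) * ((univ.val.map f).esymm k) =
      (-1) ^ (k + 1) * ∑ a ∈ antidiagonal k with a.1 < k,
        (-1) ^ a.1 * ((univ.val.map f).esymm a.1) * ∑ i, f i ^ a.2 := by
  have h := congrArg (aeval f) (MvPolynomial.mul_esymm_eq_sum (Fin m) ℝ k)
  simpa [map_sum, map_mul, map_pow, aeval_esymm_eq_multiset_esymm, psum,
    aeval_X, map_natCast] using h

open Finset in
lemma esymm_eq_of_psum_eq (m : ℕ) (s t : Multiset ℝ)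
    (hs : Multiset.card s = m) (ht : Multiset.card t = m)
    (h : ∀ k, 1 ≤ k → k ≤ m → (s.map (· ^ k)).sum = (t.map (· ^ k)).sum) :
    ∀ k, s.esymm k = t.esymm k := by
  -- enumerate s and t
  obtain ⟨ls, rfl⟩ : ∃ l : List ℝ, (l : Multiset ℝ) = s := ⟨s.toList, s.coe_toList⟩
  obtain ⟨lt, rfl⟩ : ∃ l : List ℝ, (l : Multiset ℝ) = t := ⟨t.toList, t.coe_toList⟩
  simp only [Multiset.coe_card] at hs ht
  set f : Fin m → ℝ := fun i => ls.get (Fin.cast hs.symm i) with hf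
  set g : Fin m → ℝ := fun i => lt.get (Fin.cast ht.symm i) with hg
  have hfs : (univ.val.map f) = (ls : Multiset ℝ) := by
    have : ls = List.ofFn f := by
      apply List.ext_get (by simp [hs])
      intro i h1 h2
      simp [hf]
    rw [this]
    simp [List.ofFn_eq_map, Finset.univ, Fintype.elems]
  have hgt : (univ.val.map g) = (lt : Multiset ℝ) := by
    have : lt = List.ofFn g := by
      apply List.ext_get (by simp [ht])
      intro i h1 h2
      simp [hg]
    rw [this]
    simp [List.ofFn_eq_map, Finset.univ, Fintype.elems]
  have hpsum : ∀ k, 1 ≤ k → k ≤ m → ∑ i, f i ^ k = ∑ i, g i ^ k := by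
    intro k h1 h2
    have := h k h1 h2
    rw [← hfs, ← hgt, Multiset.map_map, Multiset.map_map] at this
    simpa [Finset.sum] using this
  -- strong induction on k for k ≤ m
  have key : ∀ k, k ≤ m → ((ls : Multiset ℝ)).esymm k = ((lt : Multiset ℝ)).esymm k := by
    intro k
    induction k using Nat.strong_induction_on with
    | _ k ih =>
      intro hk
      rcases Nat.eq_zero_or_pos k with rfl | hk0
      · simp [Multiset.esymm]
      have h1 := newton_eval m f k
      have h2 := newton_eval m g k
      rw [hfs] at h1
      rw [hgt] at h2
      have hsum : ∑ a ∈ antidiagonal k with a.1 < k,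
            (-1 : ℝ) ^ a.1 * ((ls : Multiset ℝ).esymm a.1) * ∑ i, f i ^ a.2 =
          ∑ a ∈ antidiagonal k with a.1 < k,
            (-1 : ℝ) ^ a.1 * ((lt : Multiset ℝ).esymm a.1) * ∑ i, g i ^ a.2 := by
        apply Finset.sum_congr rfl
        intro a ha
        simp only [Finset.mem_filter, Finset.HasAntidiagonal.mem_antidiagonal] at ha
        obtain ⟨hadd, hlt⟩ := ha
        rw [ih a.1 hlt (le_trans (Nat.le_of_lt hlt) hk),
          hpsum a.2 (by omega) (by omega)]
      have : (k : ℝ) * (ls : Multiset ℝ).esymm k = (k : ℝ) * (lt : Multiset ℝ).esymm k := by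
        rw [h1, h2, hsum]
      have hk' : (k : ℝ) ≠ 0 := Nat.cast_ne_zero.mpr (by omega)
      exact mul_left_cancel₀ hk' this
  intro k
  rcases le_or_gt k m with hk | hk
  · exact key k hk
  · have z1 : (ls : Multiset ℝ).esymm k = 0 := by
      rw [Multiset.esymm, Multiset.powersetCard_eq_empty _ (by simp [hs, hk])]
      simp
    have z2 : (lt : Multiset ℝ).esymm k = 0 := by
      rw [Multiset.esymm, Multiset.powersetCard_eq_empty _ (by simp [ht, hk])]
      simp
    rw [z1, z2]

open Polynomial in
lemma multiset_eq_of_esymm_eq (s t : Multiset ℝ) (hcard : Multiset.card s = Multiset.card t)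
    (h : ∀ k, s.esymm k = t.esymm k) : s = t := by
  have hP : (s.map fun a => X - C a).prod = (t.map fun a => X - C a).prod := by
    apply Polynomial.ext
    intro k
    rcases le_or_gt k (Multiset.card s) with hk | hk
    · rw [Multiset.prod_X_sub_C_coeff s hk, Multiset.prod_X_sub_C_coeff t (hcard ▸ hk),
        hcard, h]
    · rw [Polynomial.coeff_eq_zero_of_natDegree_lt, Polynomial.coeff_eq_zero_of_natDegree_lt]
      · rw [Polynomial.natDegree_multiset_prod_X_sub_C_eq_card]
        omega
      · rw [Polynomial.natDegree_multiset_prod_X_sub_C_eq_card]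
        omega
  have := congrArg Polynomial.roots hP
  rwa [Polynomial.roots_multiset_prod_X_sub_C, Polynomial.roots_multiset_prod_X_sub_C] at this

lemma exists_perm_of_multiset_eq {m : ℕ} (y z : Fin m → ℝ)
    (h : Finset.univ.val.map y = Finset.univ.val.map z) :
    ∃ σ : Equiv.Perm (Fin m), z = y ∘ σ := by
  have hy := Tuple.monotone_sort y
  have hz := Tuple.monotone_sort z
  have hperm : List.Perm (List.ofFn (y ∘ Tuple.sort y)) (List.ofFn (z ∘ Tuple.sort z)) := by
    have h1 := (Tuple.sort y).ofFn_comp_perm y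
    have h2 := (Tuple.sort z).ofFn_comp_perm z
    have h3 : List.Perm (List.ofFn y) (List.ofFn z) := by
      rw [← Multiset.coe_eq_coe]
      simpa [List.ofFn_eq_map, Finset.univ, Fintype.elems] using h
    exact h1.trans (h3.trans h2.symm)
  have heq : y ∘ Tuple.sort y = z ∘ Tuple.sort z :=
    List.ofFn_injective (List.Perm.eq_of_sortedLE hy.sortedLE_ofFn hz.sortedLE_ofFn hperm)
  refine ⟨(Tuple.sort z)⁻¹.trans (Tuple.sort y), ?_⟩
  funext j
  have := congrFun heq ((Tuple.sort z)⁻¹ j)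
  simpa using this.symm

lemma erase_map_cons {n : ℕ} (x : Fin n → ℝ) (i : Fin n) :
    Finset.univ.val.map x = x i ::ₘ ((Finset.univ.erase i).val.map x) := by
  rw [Finset.erase_val]
  conv_lhs => rw [← Multiset.cons_erase (Finset.mem_val.mpr (Finset.mem_univ i)),
    Multiset.map_cons]

lemma exists_perm_full {n : ℕ} (x x' : Fin n → ℝ) (i i' : Fin n)
    (hval : x i = x' i')
    (hms : ((Finset.univ.erase i).val.map x) = ((Finset.univ.erase i').val.map x')) :
    ∃ τ : Equiv.Perm (Fin n), x' = x ∘ τ ∧ τ i' = i := by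
  have hfull : Finset.univ.val.map x = Finset.univ.val.map x' := by
    rw [erase_map_cons x i, erase_map_cons x' i', hval, hms]
  obtain ⟨σ, hσ⟩ := exists_perm_of_multiset_eq x x' hfull
  have hxσ : x (σ i') = x i := by
    have := congrFun hσ i'
    simp only [Function.comp_apply] at this
    rw [← this, hval]
  refine ⟨σ.trans (Equiv.swap (σ i') i), ?_, by simp⟩
  funext j
  have := congrFun hσ j
  simp only [Function.comp_apply, Equiv.trans_apply] at this ⊢
  rcases eq_or_ne (σ j) (σ i') with he | he
  · rw [he, Equiv.swap_apply_left, ← hxσ, ← he, ← this]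
  · rcases eq_or_ne (σ j) i with he2 | he2
    · rw [he2, Equiv.swap_apply_right, hxσ, ← he2, ← this]
    · rw [Equiv.swap_apply_of_ne_of_ne he he2, ← this]
/-- representation of `Sₙ`-equivariant maps.  Let `n ≥ 2`,
`K ⊆ ℝⁿ` compact and stable under the coordinate-permutation action, and
`F : K → ℝⁿ` continuous and `Sₙ`-equivariant.  Then there is a continuous
`ρ : ℝ^(n+1) → ℝ` with `F(x)_i = ρ (x_i, ∑_{j ≠ i} ψ (x_j))` for all `i` and
`x ∈ K`, where `ψ t = (1, t, t², …, t^(n-1))`. -/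
theorem stmt15 (n : ℕ) (hn : 2 ≤ n) (K : Set (Fin n → ℝ)) (hK : IsCompact K)
    (hstab : ∀ σ : Equiv.Perm (Fin n), ∀ x ∈ K, (fun i => x (σ⁻¹ i)) ∈ K)
    (F : (Fin n → ℝ) → (Fin n → ℝ)) (hF : ContinuousOn F K)
    (hequiv : ∀ σ : Equiv.Perm (Fin n), ∀ x ∈ K,
      F (fun i => x (σ⁻¹ i)) = fun i => F x (σ⁻¹ i)) :
    ∃ ρ : (Fin (n + 1) → ℝ) → ℝ, Continuous ρ ∧
      ∀ (i : Fin n), ∀ x ∈ K, F x i =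
        ρ (Fin.cons (x i)
            (∑ j ∈ Finset.univ.erase i, fun k : Fin n => (x j) ^ (k : ℕ))) := by
  classical
  set G : Fin n → (Fin n → ℝ) → (Fin (n + 1) → ℝ) := fun i x =>
    Fin.cons (x i) (∑ j ∈ Finset.univ.erase i, fun k : Fin n => (x j) ^ (k : ℕ)) with hG
  -- continuity of G i
  have hGcont : ∀ i, Continuous (G i) := by
    intro i
    refine continuous_pi fun k => ?_
    refine Fin.cases ?_ (fun k => ?_) k
    · simp only [hG, Fin.cons_zero]
      exact continuous_apply i
    · simp only [hG, Fin.cons_succ, Finset.sum_apply]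
      exact continuous_finset_sum _ fun j _ => (continuous_apply j).pow _
  -- well-definedness
  have hwell : ∀ i x i' x', x ∈ K → x' ∈ K → G i x = G i' x' → F x i = F x' i' := by
    intro i x i' x' hx hx' hGeq
    have hval : x i = x' i' := by
      have := congrFun hGeq 0
      simpa [hG] using this
    have hpow : ∀ k : Fin n,
        ∑ j ∈ Finset.univ.erase i, x j ^ (k : ℕ) =
          ∑ j ∈ Finset.univ.erase i', x' j ^ (k : ℕ) := by
      intro k
      have := congrFun hGeq k.succ
      simpa [hG, Finset.sum_apply] using this
    set s : Multiset ℝ := (Finset.univ.erase i).val.map x with hs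
    set t : Multiset ℝ := (Finset.univ.erase i').val.map x' with ht
    have hscard : Multiset.card s = n - 1 := by
      simp [hs, Finset.card_erase_of_mem]
    have htcard : Multiset.card t = n - 1 := by
      simp [ht, Finset.card_erase_of_mem]
    have hpsum : ∀ k, 1 ≤ k → k ≤ n - 1 →
        (s.map (· ^ k)).sum = (t.map (· ^ k)).sum := by
      intro k _ hk2
      have hkn : k < n := by omega
      have := hpow ⟨k, hkn⟩
      simpa [hs, ht, Multiset.map_map, Finset.sum] using this
    have hms : s = t :=
      multiset_eq_of_esymm_eq s t (by rw [hscard, htcard])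
        (esymm_eq_of_psum_eq (n - 1) s t hscard htcard hpsum)
    obtain ⟨τ, hτ1, hτ2⟩ := exists_perm_full x x' i i' hval hms
    have heq := hequiv τ⁻¹ x hx
    simp only [inv_inv] at heq
    have hx'eq : (fun j => x (τ j)) = x' := by
      funext j
      exact (congrFun hτ1 j).symm
    rw [hx'eq] at heq
    rw [heq]
    simp [hτ2]
  -- the graph set
  set C : Set ((Fin (n + 1) → ℝ) × ℝ) := ⋃ i, (fun x => (G i x, F x i)) '' K with hC
  have hCcomp : IsCompact C :=
    isCompact_iUnion fun i => hK.image_of_continuousOn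
      (((hGcont i).continuousOn).prodMk ((continuous_apply i).comp_continuousOn hF))
  set S : Set (Fin (n + 1) → ℝ) := Prod.fst '' C with hS
  have hScomp : IsCompact S := hCcomp.image continuous_fst
  have hSclosed : IsClosed S := hScomp.isClosed
  have huniq : ∀ p a b, (p, a) ∈ C → (p, b) ∈ C → a = b := by
    intro p a b ha hb
    simp only [hC, Set.mem_iUnion, Set.mem_image] at ha hb
    obtain ⟨i, x, hx, hxe⟩ := ha
    obtain ⟨i', x', hx', hxe'⟩ := hb
    have h1 : G i x = p := congrArg Prod.fst hxe
    have h2 : F x i = a := congrArg Prod.snd hxe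
    have h1' : G i' x' = p := congrArg Prod.fst hxe'
    have h2' : F x' i' = b := congrArg Prod.snd hxe'
    rw [← h2, ← h2']
    exact hwell i x i' x' hx hx' (h1.trans h1'.symm)
  -- build the homeomorphism C ≃ₜ S
  haveI : CompactSpace C := isCompact_iff_compactSpace.mp hCcomp
  have fbij : Function.Bijective (fun c : C => (⟨c.1.1, ⟨c.1, c.2, rfl⟩⟩ : S)) := by
    constructor
    · rintro ⟨⟨p, a⟩, ha⟩ ⟨⟨q, b⟩, hb⟩ h
      have hpq : p = q := congrArg Subtype.val h
      subst hpq
      exact Subtype.ext (Prod.ext rfl (huniq p a b ha hb))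
    · rintro ⟨p, ⟨c, hc, rfl⟩⟩
      exact ⟨⟨c, hc⟩, rfl⟩
  have fcont : Continuous (fun c : C => (⟨c.1.1, ⟨c.1, c.2, rfl⟩⟩ : S)) :=
    Continuous.subtype_mk (continuous_fst.comp continuous_subtype_val) _
  set e : C ≃ S := Equiv.ofBijective _ fbij with he
  have hecont : Continuous e := fcont
  set homeo : C ≃ₜ S := Continuous.homeoOfEquivCompactToT2 (f := e) hecont with hhomeo
  set φ : C(S, ℝ) :=
    ⟨fun p => (homeo.symm p).1.2,
      continuous_snd.comp (continuous_subtype_val.comp homeo.symm.continuous)⟩ with hφ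
  obtain ⟨ρ, hρ⟩ := φ.exists_restrict_eq hSclosed
  refine ⟨ρ, ρ.continuous, ?_⟩
  intro i x hx
  have hmem : (G i x, F x i) ∈ C := Set.mem_iUnion.mpr ⟨i, x, hx, rfl⟩
  have hpS : G i x ∈ S := ⟨(G i x, F x i), hmem, rfl⟩
  have h1 : ρ (G i x) = φ ⟨G i x, hpS⟩ := by
    have := congrFun (congrArg DFunLike.coe hρ) ⟨G i x, hpS⟩
    simpa using this
  set c : C := ⟨(G i x, F x i), hmem⟩ with hc
  have h2 : homeo c = ⟨G i x, hpS⟩ := Subtype.ext rfl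
  have h3 : φ ⟨G i x, hpS⟩ = F x i := by
    rw [hφ]
    simp only [ContinuousMap.coe_mk]
    rw [← h2, Homeomorph.symm_apply_apply]
  rw [h1, h3]
end

section
/- Let n ≥ 2, let K ⊆ ℝⁿ be a compact set stable under the coordinate-permutation action of Sₙ, let F : K → ℝⁿ be continuous and Sₙ-equivariant, and let ε > 0. Then there exist m₁, m₂ ∈ ℕ, vectors a, b ∈ ℝ^{m₁}, a matrix C ∈ ℝ^{n×m₁}, a matrix A ∈ ℝ^{m₂×(n+1)}, and vectors d, c ∈ ℝ^{m₂} such that the map G : ℝⁿ → ℝⁿ defined componentwise by G(x)_i = ⟨c, ReLU(A·(x_i, ∑_{j ≠ i} C·ReLU(x_j·a + b)) + d)⟩ satisfies sup_{x ∈ K} max_{1 ≤ i ≤ n} |F(x)_i − G(x)_i| < ε. Moreover, G is Sₙ-equivariant: G(σ·x) = σ·G(x) for all σ ∈ Sₙ and x ∈ ℝⁿ. -/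
open Finset

/-- Power sums up to the cardinality determine a tuple up to permutation. -/
lemma key_perm {ι : Type*} [Fintype ι] [DecidableEq ι] (u v : ι → ℝ)
    (h : ∀ k, 1 ≤ k → k ≤ Fintype.card ι → ∑ i, u i ^ k = ∑ i, v i ^ k) :
    ∃ π : Equiv.Perm ι, v = u ∘ π := by
  classical
  set m := Fintype.card ι with hm
  -- step 1: elementary symmetric functions agree
  have hesymm : ∀ k, k ≤ m →
      MvPolynomial.aeval u (MvPolynomial.esymm ι ℝ k)
        = MvPolynomial.aeval v (MvPolynomial.esymm ι ℝ k) := by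
    intro k
    induction k using Nat.strong_induction_on with
    | _ k ih =>
      intro hk
      rcases Nat.eq_zero_or_pos k with rfl | hk0
      · simp [MvPolynomial.esymm_zero]
      · have newton := MvPolynomial.mul_esymm_eq_sum ι ℝ k
        have hu := congrArg (MvPolynomial.aeval u) newton
        have hv := congrArg (MvPolynomial.aeval v) newton
        simp only [map_mul, map_sum, map_pow, map_neg, map_one, map_natCast] at hu hv
        have hsum : ∑ a ∈ Finset.filter (fun a => a.1 < k) (Finset.HasAntidiagonal.antidiagonal k),
              (-1:ℝ) ^ a.1 * MvPolynomial.aeval u (MvPolynomial.esymm ι ℝ a.1)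
                * MvPolynomial.aeval u (MvPolynomial.psum ι ℝ a.2)
            = ∑ a ∈ Finset.filter (fun a => a.1 < k) (Finset.HasAntidiagonal.antidiagonal k),
              (-1:ℝ) ^ a.1 * MvPolynomial.aeval v (MvPolynomial.esymm ι ℝ a.1)
                * MvPolynomial.aeval v (MvPolynomial.psum ι ℝ a.2) := by
          apply Finset.sum_congr rfl
          intro a ha
          simp only [Finset.mem_filter, Finset.HasAntidiagonal.mem_antidiagonal] at ha
          have h1 : MvPolynomial.aeval u (MvPolynomial.esymm ι ℝ a.1)
              = MvPolynomial.aeval v (MvPolynomial.esymm ι ℝ a.1) :=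
            ih a.1 ha.2 (by omega)
          have h2 : MvPolynomial.aeval u (MvPolynomial.psum ι ℝ a.2)
              = MvPolynomial.aeval v (MvPolynomial.psum ι ℝ a.2) := by
            simp only [MvPolynomial.psum, map_sum, map_pow, MvPolynomial.aeval_X]
            exact h a.2 (by omega) (by omega)
          rw [h1, h2]
        have hkne : (k : ℝ) ≠ 0 := Nat.cast_ne_zero.mpr hk0.ne'
        apply mul_left_cancel₀ hkne
        rw [hu, hv, hsum]
  -- step 2: multisets agree
  have hmult : Multiset.map u Finset.univ.val = Multiset.map v Finset.univ.val := by
    have hcardu : Multiset.card (Multiset.map u Finset.univ.val) = m := by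
      rw [Multiset.card_map]; exact Finset.card_univ
    have hcardv : Multiset.card (Multiset.map v Finset.univ.val) = m := by
      rw [Multiset.card_map]; exact Finset.card_univ
    have hme : ∀ k, k ≤ m → (Multiset.map u Finset.univ.val).esymm k
        = (Multiset.map v Finset.univ.val).esymm k := by
      intro k hk
      have := hesymm k hk
      rwa [MvPolynomial.aeval_esymm_eq_multiset_esymm, MvPolynomial.aeval_esymm_eq_multiset_esymm]
        at this
    have hpoly : ((Multiset.map u Finset.univ.val).map fun t => Polynomial.X - Polynomial.C t).prod
        = ((Multiset.map v Finset.univ.val).map fun t => Polynomial.X - Polynomial.C t).prod := by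
      apply Polynomial.ext
      intro k
      rcases le_or_gt k m with hk | hk
      · rw [Multiset.prod_X_sub_C_coeff _ (by rw [hcardu]; exact hk),
          Multiset.prod_X_sub_C_coeff _ (by rw [hcardv]; exact hk), hcardu, hcardv,
          hme (m - k) (Nat.sub_le _ _)]
      · rw [Polynomial.coeff_eq_zero_of_natDegree_lt, Polynomial.coeff_eq_zero_of_natDegree_lt]
        · rw [Polynomial.natDegree_multiset_prod_X_sub_C_eq_card, hcardv]; exact hk
        · rw [Polynomial.natDegree_multiset_prod_X_sub_C_eq_card, hcardu]; exact hk
    have := congrArg Polynomial.roots hpoly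
    rwa [Polynomial.roots_multiset_prod_X_sub_C, Polynomial.roots_multiset_prod_X_sub_C] at this
  -- step 3: extract a permutation via sorting
  let eF : ι ≃ Fin m := (Fintype.equivFin ι)
  set u' : Fin m → ℝ := u ∘ eF.symm with hu'
  set v' : Fin m → ℝ := v ∘ eF.symm with hv'
  have hBij : ∀ (σ : Fin m ≃ ι), Multiset.map (⇑σ) (Finset.univ.val) = Finset.univ.val := by
    intro σ
    have := congrArg Finset.val (Finset.map_univ_equiv σ)
    simpa using this
  have hBij' : ∀ (σ : Equiv.Perm (Fin m)), Multiset.map (⇑σ) (Finset.univ.val) = Finset.univ.val := by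
    intro σ
    have := congrArg Finset.val (Finset.map_univ_equiv σ)
    simpa using this
  have huniv : Multiset.map (⇑eF.symm) Finset.univ.val = Finset.univ.val := hBij eF.symm
  have hmult' : Multiset.map u' Finset.univ.val = Multiset.map v' Finset.univ.val := by
    have h1 : Multiset.map u' Finset.univ.val = Multiset.map u Finset.univ.val := by
      rw [hu', ← Multiset.map_map, huniv]
    have h2 : Multiset.map v' Finset.univ.val = Multiset.map v Finset.univ.val := by
      rw [hv', ← Multiset.map_map, huniv]
    rw [h1, h2, hmult]
  set σu := Tuple.sort u' with hσu
  set σv := Tuple.sort v' with hσv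
  have hperm : (List.ofFn (u' ∘ σu)).Perm (List.ofFn (v' ∘ σv)) := by
    rw [← Multiset.coe_eq_coe]
    have huu : ∀ (w : Fin m → ℝ) (σ : Equiv.Perm (Fin m)),
        (↑(List.ofFn (w ∘ σ)) : Multiset ℝ) = Multiset.map w Finset.univ.val := by
      intro w σ
      rw [List.ofFn_eq_map]
      have h1 : ((List.finRange m).map (w ∘ σ) : Multiset ℝ)
          = Multiset.map (w ∘ σ) (↑(List.finRange m)) := (Multiset.map_coe _ _).symm
      have hfr : (↑(List.finRange m) : Multiset (Fin m)) = Finset.univ.val := by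
        rw [Fin.univ_def]
      rw [h1, hfr, ← Multiset.map_map, hBij' σ]
    rw [huu u' σu, huu v' σv, hmult']
  have hsorted : List.ofFn (u' ∘ σu) = List.ofFn (v' ∘ σv) :=
    List.Perm.eq_of_sortedLE
      (List.sortedLE_ofFn_iff.mpr (Tuple.monotone_sort u'))
      (List.sortedLE_ofFn_iff.mpr (Tuple.monotone_sort v')) hperm
  have heq : u' ∘ σu = v' ∘ σv := List.ofFn_injective hsorted
  refine ⟨(eF.trans (σv.symm.trans (σu.trans eF.symm))), ?_⟩
  funext i
  have : v' (σv (σv.symm (eF i))) = u' (σu (σv.symm (eF i))) :=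
    (congrFun heq (σv.symm (eF i))).symm
  simp only [Equiv.apply_symm_apply] at this
  simpa [hu', hv', Function.comp] using this
lemma fiber_perm (n : ℕ) (i₀ : Fin n) (x y : Fin n → ℝ) (h0 : x i₀ = y i₀)
    (hps : ∀ ℓ : Fin n, ∑ j ∈ Finset.univ.erase i₀, x j ^ (ℓ.1 + 1)
      = ∑ j ∈ Finset.univ.erase i₀, y j ^ (ℓ.1 + 1)) :
    ∃ σ : Equiv.Perm (Fin n), σ⁻¹ i₀ = i₀ ∧ (fun i => x (σ⁻¹ i)) = y := by
  classical
  have hmem : ∀ j : Fin n, j ∈ Finset.univ.erase i₀ ↔ j ≠ i₀ := by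
    intro j; simp [Finset.mem_erase]
  have hcard : Fintype.card {j : Fin n // j ≠ i₀} = n - 1 := by
    simp [Fintype.card_subtype_compl]
  have hkey : ∀ k, 1 ≤ k → k ≤ Fintype.card {j : Fin n // j ≠ i₀} →
      ∑ j : {j : Fin n // j ≠ i₀}, x j.1 ^ k = ∑ j : {j : Fin n // j ≠ i₀}, y j.1 ^ k := by
    intro k hk1 hk2
    rw [hcard] at hk2
    have hx := hps ⟨k - 1, by omega⟩
    have hk : k - 1 + 1 = k := by omega
    simp only [hk] at hx
    rw [Finset.sum_subtype (Finset.univ.erase i₀) hmem (fun j => x j ^ k),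
      Finset.sum_subtype (Finset.univ.erase i₀) hmem (fun j => y j ^ k)] at hx
    exact hx
  obtain ⟨π, hπ⟩ := key_perm (fun j : {j : Fin n // j ≠ i₀} => x j.1)
      (fun j : {j : Fin n // j ≠ i₀} => y j.1) hkey
  refine ⟨(Equiv.Perm.ofSubtype π)⁻¹, ?_, ?_⟩
  · simp only [inv_inv]
    exact Equiv.Perm.ofSubtype_apply_of_not_mem π (by simp)
  · funext j
    simp only [inv_inv]
    by_cases hj : j = i₀
    · subst hj
      rw [Equiv.Perm.ofSubtype_apply_of_not_mem π (by simp)]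
      exact h0
    · rw [Equiv.Perm.ofSubtype_apply_of_mem π hj]
      exact (congrFun hπ ⟨j, hj⟩).symm
lemma factor (n : ℕ) (hn : 2 ≤ n) (K : Set (Fin n → ℝ)) (hK : IsCompact K)
    (hstab : ∀ σ : Equiv.Perm (Fin n), ∀ x ∈ K, (fun i => x (σ⁻¹ i)) ∈ K)
    (F : (Fin n → ℝ) → (Fin n → ℝ)) (hF : ContinuousOn F K)
    (hequiv : ∀ σ : Equiv.Perm (Fin n), ∀ x ∈ K,
      F (fun i => x (σ⁻¹ i)) = fun i => F x (σ⁻¹ i)) :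
    ∃ g : (Fin (n + 1) → ℝ) → ℝ, Continuous g ∧ ∀ x ∈ K, ∀ i : Fin n,
      g (Fin.cons (x i) (∑ j ∈ Finset.univ.erase i, fun ℓ : Fin n => x j ^ (ℓ.1 + 1)))
        = F x i := by
  classical
  have hn0 : 0 < n := by omega
  set i₀ : Fin n := ⟨0, hn0⟩ with hi₀
  set q : (Fin n → ℝ) → (Fin (n + 1) → ℝ) := fun x =>
    Fin.cons (x i₀) (∑ j ∈ Finset.univ.erase i₀, fun ℓ : Fin n => x j ^ (ℓ.1 + 1)) with hq
  have hqcont : Continuous q := by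
    apply continuous_pi
    intro l
    refine Fin.cases ?_ ?_ l
    · simpa [hq] using (continuous_apply i₀)
    · intro ℓ
      simp only [hq, Fin.cons_succ]
      have : (fun x : Fin n → ℝ =>
          (∑ j ∈ Finset.univ.erase i₀, fun ℓ' : Fin n => x j ^ (ℓ'.1 + 1)) ℓ)
          = fun x : Fin n → ℝ => ∑ j ∈ Finset.univ.erase i₀, x j ^ (ℓ.1 + 1) := by
        funext x
        simp [Finset.sum_apply]
      rw [this]
      exact continuous_finset_sum _ (fun j _ => ((continuous_apply j).pow _))
  have hfib : ∀ x ∈ K, ∀ y ∈ K, q x = q y → F x i₀ = F y i₀ := by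
    intro x hx y hy hxy
    have h0 : x i₀ = y i₀ := by
      have := congrFun hxy 0
      simpa [hq] using this
    have hps : ∀ ℓ : Fin n, ∑ j ∈ Finset.univ.erase i₀, x j ^ (ℓ.1 + 1)
        = ∑ j ∈ Finset.univ.erase i₀, y j ^ (ℓ.1 + 1) := by
      intro ℓ
      have := congrFun hxy ℓ.succ
      simp only [hq, Fin.cons_succ] at this
      simpa [Finset.sum_apply] using this
    obtain ⟨σ, hσ0, hσ⟩ := fiber_perm n i₀ x y h0 hps
    have h2 := congrFun (hequiv σ x hx) i₀
    rw [hσ0, hσ] at h2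
    exact h2.symm
  -- quotient construction
  haveI : CompactSpace K := isCompact_iff_compactSpace.mp hK
  set L : Set (Fin (n + 1) → ℝ) := (fun z : K => q z.1) '' Set.univ with hL
  have hLcomp : IsCompact L := (isCompact_univ).image (hqcont.comp continuous_subtype_val)
  set Q : K → L := fun z => ⟨q z.1, ⟨z, Set.mem_univ _, rfl⟩⟩ with hQ
  have hQcont : Continuous Q := Continuous.subtype_mk (hqcont.comp continuous_subtype_val) _
  have hQsurj : Function.Surjective Q := by
    rintro ⟨w, ⟨z, -, rfl⟩⟩
    exact ⟨z, rfl⟩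
  have hquot := Topology.IsQuotientMap.of_surjective_continuous hQsurj hQcont
  set g₀ : L → ℝ := fun w => F (Function.surjInv hQsurj w).1 i₀ with hg₀
  have hg₀Q : ∀ z : K, g₀ (Q z) = F z.1 i₀ := by
    intro z
    have h1 : Q (Function.surjInv hQsurj (Q z)) = Q z := Function.surjInv_eq hQsurj (Q z)
    have h2 : q (Function.surjInv hQsurj (Q z)).1 = q z.1 :=
      congrArg Subtype.val h1
    exact hfib _ (Function.surjInv hQsurj (Q z)).2 _ z.2 h2
  have hg₀cont : Continuous g₀ := by
    rw [hquot.continuous_iff]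
    have : (g₀ ∘ Q) = fun z : K => F z.1 i₀ := funext hg₀Q
    rw [this]
    exact (continuous_apply i₀).comp hF.restrict
  -- Tietze extension
  obtain ⟨gext, hgext⟩ := ContinuousMap.exists_restrict_eq (Y := ℝ)
    (hLcomp.isClosed) (⟨g₀, hg₀cont⟩ : C(L, ℝ))
  refine ⟨gext, gext.continuous, ?_⟩
  have hgL : ∀ x ∈ K, gext (q x) = F x i₀ := by
    intro x hx
    have h1 : gext (q x) = g₀ (Q ⟨x, hx⟩) := congrFun (congrArg DFunLike.coe hgext) (Q ⟨x, hx⟩)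
    rw [h1, hg₀Q]
  -- general i via a transposition
  intro x hx i
  set τ : Equiv.Perm (Fin n) := Equiv.swap i₀ i with hτ
  set x' : Fin n → ℝ := fun j => x (τ⁻¹ j) with hx'
  have hx'K : x' ∈ K := hstab τ x hx
  have hx'i₀ : x' i₀ = x i := by
    simp [hx', hτ, Equiv.swap_inv, Equiv.swap_apply_left]
  have hsum : ∑ j ∈ Finset.univ.erase i₀, (fun ℓ : Fin n => x' j ^ (ℓ.1 + 1))
      = ∑ j ∈ Finset.univ.erase i, fun ℓ : Fin n => x j ^ (ℓ.1 + 1) := by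
    apply Finset.sum_nbij' (fun j => τ⁻¹ j) (fun j => τ j)
    · intro j hj
      simp only [Finset.mem_erase, Finset.mem_univ, and_true] at hj ⊢
      intro hji
      apply hj
      rw [hτ, Equiv.swap_inv] at hji
      have h1 := congrArg (Equiv.swap i₀ i) hji
      simpa [Equiv.swap_apply_self, Equiv.swap_apply_right] using h1
    · intro j hj
      simp only [Finset.mem_erase, Finset.mem_univ, and_true] at hj ⊢
      intro hji
      apply hj
      rw [hτ] at hji
      have h1 := congrArg (Equiv.swap i₀ i) hji
      simpa [Equiv.swap_apply_self, Equiv.swap_apply_left] using h1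
    · intro j _; simp
    · intro j _; simp
    · intro j _
      rfl
  have hq' : q x' = Fin.cons (x i) (∑ j ∈ Finset.univ.erase i, fun ℓ : Fin n => x j ^ (ℓ.1 + 1)) := by
    rw [hq]
    simp only
    rw [hx'i₀, hsum]
  have hFx' : F x' i₀ = F x i := by
    have h2 := congrFun (hequiv τ x hx) i₀
    have h3 : τ⁻¹ i₀ = i := by simp [hτ, Equiv.swap_inv, Equiv.swap_apply_left]
    rw [h3] at h2
    exact h2
  rw [← hq', hgL x' hx'K, hFx']
lemma net_reindex {ι : Type*} [Fintype ι] (a b c : ι → ℝ) :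
    ∃ (m : ℕ) (a' b' c' : Fin m → ℝ), ∀ t : ℝ,
      ∑ p, c' p * max (t * a' p + b' p) 0 = ∑ p : ι, c p * max (t * a p + b p) 0 := by
  refine ⟨Fintype.card ι, a ∘ (Fintype.equivFin ι).symm, b ∘ (Fintype.equivFin ι).symm,
    c ∘ (Fintype.equivFin ι).symm, fun t => ?_⟩
  exact Equiv.sum_comp (Fintype.equivFin ι).symm
    (fun i => c i * max (t * a i + b i) 0)

lemma net1d (g : ℝ → ℝ) (hg : Continuous g) (R ε : ℝ) (hR : 0 < R) (hε : 0 < ε) :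
    ∃ (m : ℕ) (a b c : Fin m → ℝ), ∀ t, |t| ≤ R →
      |g t - ∑ p, c p * max (t * a p + b p) 0| < ε := by
  classical
  have huc := (isCompact_Icc : IsCompact (Set.Icc (-R) R)).uniformContinuousOn_of_continuous
    hg.continuousOn
  rw [Metric.uniformContinuousOn_iff] at huc
  obtain ⟨δ, hδ0, hδ⟩ := huc (ε/2) (by linarith)
  set N : ℕ := ⌈(2*R)/δ⌉₊ + 1 with hN
  have hN0 : 0 < N := Nat.succ_pos _
  set h : ℝ := 2*R/N with hh
  have hNR : (0:ℝ) < N := Nat.cast_pos.mpr hN0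
  have hh0 : 0 < h := div_pos (by linarith) hNR
  have hhδ : h ≤ δ := by
    rw [hh, div_le_iff₀ hNR]
    have h1 : (2*R)/δ ≤ (⌈(2*R)/δ⌉₊ : ℝ) := Nat.le_ceil _
    have h2 : ((⌈(2*R)/δ⌉₊ : ℝ)) ≤ N := by rw [hN]; push_cast; linarith
    have h3 : (2*R)/δ ≤ (N:ℝ) := le_trans h1 h2
    calc 2*R = ((2*R)/δ) * δ := by field_simp
    _ ≤ (N:ℝ) * δ := mul_le_mul_of_nonneg_right h3 (le_of_lt hδ0)
    _ = δ * N := by ring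
  have hNh : (N : ℝ) * h = 2*R := by rw [hh]; field_simp
  set T : ℕ → ℝ := fun k => -R + k*h with hTdef
  have hT : ∀ k : ℕ, T k = -R + k*h := fun _ => rfl
  set hat : ℕ → ℝ → ℝ := fun k t =>
    max (t - T k + h) 0 - 2*max (t - T k) 0 + max (t - T k - h) 0 with hhatdef
  have hhat : ∀ (k : ℕ) (t : ℝ), hat k t
      = max (t - T k + h) 0 - 2*max (t - T k) 0 + max (t - T k - h) 0 := fun _ _ => rfl
  clear_value N h T hat
  have hatnn : ∀ k t, 0 ≤ hat k t := by
    intro k t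
    rw [hhat]
    rcases le_total (t - T k) 0 with hc | hc
    · rw [max_eq_right hc]
      linarith [le_max_right (t - T k + h) (0:ℝ), le_max_right (t - T k - h) (0:ℝ)]
    · rw [max_eq_left hc]
      linarith [le_max_left (t - T k + h) (0:ℝ), le_max_left (t - T k - h) (0:ℝ)]
  have hatzero : ∀ k t, h ≤ |t - T k| → hat k t = 0 := by
    intro k t hd
    rw [hhat]
    rcases le_or_gt (t - T k) 0 with hc | hc
    · have hle : t - T k ≤ -h := by
        rcases abs_cases (t - T k) with ⟨he, -⟩ | ⟨he, -⟩ <;> linarith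
      rw [max_eq_right (by linarith), max_eq_right (by linarith),
        max_eq_right (by linarith)]
      ring
    · have hge : h ≤ t - T k := by
        rcases abs_cases (t - T k) with ⟨he, -⟩ | ⟨he, -⟩ <;> linarith
      rw [max_eq_left (by linarith), max_eq_left (by linarith),
        max_eq_left (by linarith)]
      ring
  -- partition of unity
  have hatsum : ∀ t, -R ≤ t → t ≤ R → ∑ k ∈ range (N+1), hat k t = h := by
    intro t ht1 ht2
    set A : ℕ → ℝ := fun k => max (t + R + h - k*h) 0 with hAdef
    have hA : ∀ k : ℕ, A k = max (t + R + h - k*h) 0 := fun _ => rfl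
    clear_value A
    have hU : ∀ k : ℕ, hat k t = (A k - A (k+1)) - (A (k+1) - A (k+2)) := by
      intro k
      rw [hhat, hA, hA, hA]
      have e1 : t - T k + h = t + R + h - (k:ℝ)*h := by rw [hT]; ring
      have e3 : t - T k - h = t + R + h - ((k+2:ℕ):ℝ)*h := by rw [hT]; push_cast; ring
      have e2 : t - T k = t + R + h - ((k+1:ℕ):ℝ)*h := by rw [hT]; push_cast; ring
      rw [e1, e3, e2]
      ring
    rw [Finset.sum_congr rfl (fun k _ => hU k), Finset.sum_sub_distrib]
    have t1 : ∑ k ∈ range (N+1), (A k - A (k+1)) = A 0 - A (N+1) :=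
      Finset.sum_range_sub' A (N+1)
    have t2 : ∑ k ∈ range (N+1), (A (k+1) - A (k+2)) = A 1 - A (N+2) :=
      Finset.sum_range_sub' (fun k => A (k+1)) (N+1)
    rw [t1, t2]
    have v1 : A 0 = t + R + h := by
      rw [hA]
      have e : t + R + h - ((0:ℕ):ℝ)*h = t + R + h := by push_cast; ring
      rw [e]
      exact max_eq_left (by linarith)
    have v2 : A (N+1) = 0 := by
      rw [hA]
      have e : t + R + h - ((N+1:ℕ):ℝ)*h = t - R := by push_cast; linear_combination -hNh
      rw [e]
      exact max_eq_right (by linarith)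
    have v3 : A 1 = t + R := by
      rw [hA]
      have e : t + R + h - ((1:ℕ):ℝ)*h = t + R := by push_cast; ring
      rw [e]
      exact max_eq_left (by linarith)
    have v4 : A (N+2) = 0 := by
      rw [hA]
      have e : t + R + h - ((N+2:ℕ):ℝ)*h = t - R - h := by push_cast; linear_combination -hNh
      rw [e]
      exact max_eq_right (by linarith)
    rw [v1, v2, v3, v4]
    ring
  have hTmem : ∀ k ∈ range (N+1), T k ∈ Set.Icc (-R) R := by
    intro k hk
    rw [Finset.mem_range] at hk
    have hk' : (k:ℝ) ≤ N := by exact_mod_cast Nat.lt_succ_iff.mp hk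
    constructor
    · rw [hT]; nlinarith
    · rw [hT]; nlinarith
  -- main bound for the raw net
  have hmain : ∀ t, |t| ≤ R →
      |g t - ∑ k ∈ range (N+1), (g (T k) / h) * hat k t| ≤ ε/2 := by
    intro t ht
    obtain ⟨ht1, ht2⟩ := abs_le.mp ht
    have hsum := hatsum t ht1 ht2
    have hne : h ≠ 0 := ne_of_gt hh0
    have hgt : g t = ∑ k ∈ range (N+1), (g t / h) * hat k t := by
      rw [← Finset.mul_sum, hsum]
      field_simp
    have hdiff : g t - ∑ k ∈ range (N+1), (g (T k) / h) * hat k t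
        = ∑ k ∈ range (N+1), ((g t - g (T k))/h) * hat k t := by
      have e : ∑ k ∈ range (N+1), ((g t - g (T k))/h) * hat k t
          = (∑ k ∈ range (N+1), (g t / h) * hat k t)
            - ∑ k ∈ range (N+1), (g (T k) / h) * hat k t := by
        rw [← Finset.sum_sub_distrib]
        exact Finset.sum_congr rfl (fun k _ => by ring)
      rw [e, ← hgt]
    rw [hdiff]
    calc |∑ k ∈ range (N+1), ((g t - g (T k))/h) * hat k t|
        ≤ ∑ k ∈ range (N+1), |((g t - g (T k))/h) * hat k t| :=
          Finset.abs_sum_le_sum_abs _ _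
      _ ≤ ∑ k ∈ range (N+1), (ε/2/h) * hat k t := by
          apply Finset.sum_le_sum
          intro k hk
          rw [abs_mul, abs_of_nonneg (hatnn k t)]
          rcases eq_or_ne (hat k t) 0 with h0 | h0
          · rw [h0]; simp
          · apply mul_le_mul_of_nonneg_right _ (hatnn k t)
            rw [abs_div, abs_of_pos hh0, div_le_div_iff_of_pos_right hh0]
            have hd : |t - T k| < h := by
              by_contra hcon
              exact h0 (hatzero k t (le_of_not_gt hcon))
            have hTk := hTmem k hk
            have := hδ t ⟨ht1, ht2⟩ (T k) hTk
              (by rw [Real.dist_eq]; exact lt_of_lt_of_le hd hhδ)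
            rw [Real.dist_eq] at this
            linarith
      _ = (ε/2/h) * h := by rw [← Finset.mul_sum, hsum]
      _ = ε/2 := by field_simp
  -- express the raw net as a ReLU network
  obtain ⟨m, a', b', c', hnet⟩ := net_reindex (ι := Fin (N+1) × Fin 3)
    (fun _ => (1:ℝ))
    (fun q => ![-(T q.1) + h, -(T q.1), -(T q.1) - h] q.2)
    (fun q => ![g (T q.1)/h, -2*(g (T q.1)/h), g (T q.1)/h] q.2)
  refine ⟨m, a', b', c', fun t ht => ?_⟩
  have hform : ∑ p, c' p * max (t * a' p + b' p) 0
      = ∑ k ∈ range (N+1), (g (T k) / h) * hat k t := by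
    rw [hnet]
    rw [Fintype.sum_prod_type]
    rw [← Fin.sum_univ_eq_sum_range (fun k => (g (T k) / h) * hat k t) (N+1)]
    apply Finset.sum_congr rfl
    intro k _
    rw [Fin.sum_univ_three]
    simp only [Matrix.cons_val_zero, Matrix.cons_val_one, Matrix.head_cons,
      Matrix.cons_val_two, Matrix.tail_cons]
    have m1 : t * 1 + (-(T k) + h) = t - T (k:ℕ) + h := by ring
    have m2 : t * 1 + (-(T k)) = t - T (k:ℕ) := by ring
    have m3 : t * 1 + (-(T k) - h) = t - T (k:ℕ) - h := by ring
    rw [m1, m2, m3, hhat]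
    ring
  rw [hform]
  calc |g t - ∑ k ∈ range (N+1), (g (T k) / h) * hat k t| ≤ ε/2 := hmain t ht
    _ < ε := by linarith
lemma net_reindexM {ι : Type*} [Fintype ι] (m : ℕ) (W : ι → Fin m → ℝ) (d c : ι → ℝ) :
    ∃ (M : ℕ) (A : Matrix (Fin M) (Fin m) ℝ) (d' c' : Fin M → ℝ), ∀ y : Fin m → ℝ,
      ∑ k, c' k * max ((A.mulVec y + d') k) 0
        = ∑ k : ι, c k * max ((∑ l, W k l * y l) + d k) 0 := by
  set e := (Fintype.equivFin ι).symm with he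
  refine ⟨Fintype.card ι, Matrix.of (fun p => W (e p)), d ∘ e, c ∘ e, fun y => ?_⟩
  have h1 : ∀ p : Fin (Fintype.card ι),
      ((Matrix.of (fun p => W (e p))).mulVec y + d ∘ e) p
        = (∑ l, W (e p) l * y l) + d (e p) := by
    intro p
    simp [Matrix.mulVec, dotProduct]
  calc ∑ p, (c ∘ e) p * max (((Matrix.of (fun p => W (e p))).mulVec y + d ∘ e) p) 0
      = ∑ p, c (e p) * max ((∑ l, W (e p) l * y l) + d (e p)) 0 := by
        apply Finset.sum_congr rfl
        intro p _
        rw [h1]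
        rfl
    _ = ∑ k : ι, c k * max ((∑ l, W k l * y l) + d k) 0 :=
        Equiv.sum_comp e (fun k => c k * max ((∑ l, W k l * y l) + d k) 0)

lemma netMulti (m : ℕ) (f : (Fin m → ℝ) → ℝ) (hf : Continuous f)
    (B : Set (Fin m → ℝ)) (hB : IsCompact B) (ε : ℝ) (hε : 0 < ε) :
    ∃ (M : ℕ) (A : Matrix (Fin M) (Fin m) ℝ) (d c : Fin M → ℝ),
      ∀ y ∈ B, |f y - ∑ k, c k * max ((A.mulVec y + d) k) 0| < ε := by
  classical
  haveI : CompactSpace B := isCompact_iff_compactSpace.mp hB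
  -- exponential ridge functions
  have ercont : ∀ w : Fin m → ℝ, Continuous (fun y : B => Real.exp (∑ l, w l * (y : Fin m → ℝ) l)) := by
    intro w
    exact Real.continuous_exp.comp (continuous_finset_sum _ (fun l _ =>
      continuous_const.mul ((continuous_apply l).comp continuous_subtype_val)))
  set er : (Fin m → ℝ) → C(B, ℝ) := fun w => ⟨_, ercont w⟩ with her
  have ermul : ∀ w w', er w * er w' = er (w + w') := by
    intro w w'
    ext y
    simp only [her, ContinuousMap.mul_apply, ContinuousMap.coe_mk]
    rw [← Real.exp_add, ← Finset.sum_add_distrib]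
    congr 1
    apply Finset.sum_congr rfl
    intro l _
    simp [add_mul]
  have erone : er 0 = 1 := by
    ext y
    simp [her]
  set Smon : Submonoid C(B, ℝ) :=
    { carrier := Set.range er
      one_mem' := ⟨0, erone⟩
      mul_mem' := by
        rintro _ _ ⟨w, rfl⟩ ⟨w', rfl⟩
        exact ⟨w + w', (ermul w w').symm⟩ } with hSmon
  set A₀ : Subalgebra ℝ C(B, ℝ) := Algebra.adjoin ℝ (Set.range er) with hA₀
  have hsep : A₀.SeparatesPoints := by
    intro y y' hyy
    have hvne : (y : Fin m → ℝ) ≠ (y' : Fin m → ℝ) := fun hh => hyy (Subtype.ext hh)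
    obtain ⟨l, hl⟩ := Function.ne_iff.mp hvne
    refine ⟨_, ⟨er (Pi.single l (1:ℝ)), Algebra.subset_adjoin ⟨Pi.single l (1:ℝ), rfl⟩, rfl⟩, ?_⟩
    simp only [her, ContinuousMap.coe_mk]
    have hsingle : ∀ z : B, ∑ l', (Pi.single l (1:ℝ) : Fin m → ℝ) l' * (z : Fin m → ℝ) l'
        = (z : Fin m → ℝ) l := by
      intro z
      rw [Finset.sum_eq_single l]
      · simp
      · intro b _ hb; simp [Pi.single_apply, hb]
      · intro hb; exact absurd (Finset.mem_univ l) hb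
    rw [hsingle, hsingle]
    exact fun hc => hl (Real.exp_eq_exp.mp hc)
  -- Stone-Weierstrass
  obtain ⟨gg, hgg⟩ := ContinuousMap.exists_mem_subalgebra_near_continuousMap_of_separatesPoints
    A₀ hsep (ContinuousMap.restrict B ⟨f, hf⟩) (ε/2) (by linarith)
  -- decompose gg as a linear combination of exponential ridges
  have hmem : (gg : C(B, ℝ)) ∈ Submodule.span ℝ (Smon : Set C(B, ℝ)) := by
    have h2 : (gg : C(B, ℝ)) ∈ Subalgebra.toSubmodule (Algebra.adjoin ℝ (Set.range er)) := gg.2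
    rw [Algebra.adjoin_eq_span] at h2
    have h3 : Submonoid.closure (Set.range er) = Smon := Submonoid.closure_eq Smon
    rwa [h3] at h2
  rw [Submodule.mem_span_set'] at hmem
  obtain ⟨s, coef, vv, hvv⟩ := hmem
  have hw : ∀ i : Fin s, ∃ w : Fin m → ℝ, (vv i : C(B, ℝ)) = er w := by
    intro i
    obtain ⟨w, hw⟩ := (vv i).2
    exact ⟨w, hw.symm⟩
  choose w hwspec using hw
  have hggy : ∀ y : B, (gg : C(B,ℝ)) y = ∑ i, coef i * Real.exp (∑ l, w i l * (y : Fin m → ℝ) l) := by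
    intro y
    have h1 := congrArg (fun F : C(B, ℝ) => F y) hvv
    rw [← h1]
    rw [ContinuousMap.coe_sum, Finset.sum_apply]
    apply Finset.sum_congr rfl
    intro i _
    rw [ContinuousMap.coe_smul, Pi.smul_apply, hwspec i]
    simp [her]
  -- bound on B
  obtain ⟨r, hr⟩ := hB.isBounded.subset_closedBall 0
  set R0 : ℝ := max r 0 + 1 with hR0
  have hR0pos : 0 < R0 := by positivity
  have hyR0 : ∀ y ∈ B, ∀ l, |y l| ≤ R0 := by
    intro y hy l
    have h1 : dist y 0 ≤ r := by simpa [Metric.mem_closedBall] using hr hy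
    have h2 : dist (y l) 0 ≤ dist y 0 := dist_le_pi_dist y 0 l
    have : |y l| = dist (y l) 0 := by simp [Real.dist_eq]
    rw [this]
    calc dist (y l) 0 ≤ r := le_trans h2 h1
      _ ≤ R0 := by rw [hR0]; linarith [le_max_left r (0:ℝ)]
  -- approximate each exponential ridge
  set δ : ℝ := ε / (2 * ((∑ i, |coef i|) + 1)) with hδdef
  have hsumnn : 0 ≤ ∑ i, |coef i| := Finset.sum_nonneg (fun i _ => abs_nonneg _)
  have hδpos : 0 < δ := by
    rw [hδdef]
    positivity
  have hRi : ∀ i : Fin s, 0 < (∑ l, |w i l|) * R0 + 1 := by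
    intro i
    have : 0 ≤ ∑ l, |w i l| := Finset.sum_nonneg (fun l _ => abs_nonneg _)
    nlinarith
  choose mm aa bb cc hnet using fun i : Fin s =>
    net1d Real.exp Real.continuous_exp ((∑ l, |w i l|) * R0 + 1) δ (hRi i) hδpos
  have hinbound : ∀ i : Fin s, ∀ y ∈ B, |∑ l, w i l * y l| ≤ (∑ l, |w i l|) * R0 + 1 := by
    intro i y hy
    calc |∑ l, w i l * y l| ≤ ∑ l, |w i l * y l| := Finset.abs_sum_le_sum_abs _ _
      _ ≤ ∑ l, |w i l| * R0 := by
          apply Finset.sum_le_sum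
          intro l _
          rw [abs_mul]
          exact mul_le_mul_of_nonneg_left (hyR0 y hy l) (abs_nonneg _)
      _ = (∑ l, |w i l|) * R0 := by rw [Finset.sum_mul]
      _ ≤ (∑ l, |w i l|) * R0 + 1 := by linarith
  -- assemble the total network over a sigma type
  obtain ⟨M, A, d', c', hfin⟩ := net_reindexM (ι := Σ i : Fin s, Fin (mm i)) m
    (fun q => fun l => aa q.1 q.2 * w q.1 l)
    (fun q => bb q.1 q.2)
    (fun q => coef q.1 * cc q.1 q.2)
  refine ⟨M, A, d', c', fun y hy => ?_⟩
  rw [hfin y]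
  have hsigma : ∑ q : Σ i : Fin s, Fin (mm i),
      (coef q.1 * cc q.1 q.2) * max ((∑ l, (aa q.1 q.2 * w q.1 l) * y l) + bb q.1 q.2) 0
      = ∑ i : Fin s, coef i *
          ∑ p : Fin (mm i), cc i p * max ((∑ l, w i l * y l) * aa i p + bb i p) 0 := by
    rw [← Finset.univ_sigma_univ, Finset.sum_sigma]
    apply Finset.sum_congr rfl
    intro i _
    rw [Finset.mul_sum]
    apply Finset.sum_congr rfl
    intro p _
    have harg : (∑ l, (aa i p * w i l) * y l) = (∑ l, w i l * y l) * aa i p := by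
      rw [Finset.sum_mul]
      apply Finset.sum_congr rfl
      intro l _
      ring
    rw [harg]
    ring
  rw [hsigma]
  -- final estimate
  have hptg : |f y - (gg : C(B,ℝ)) ⟨y, hy⟩| ≤ ε/2 := by
    have h1 : ‖((gg : C(B,ℝ)) - ContinuousMap.restrict B ⟨f, hf⟩) ⟨y, hy⟩‖
        ≤ ‖(gg : C(B,ℝ)) - ContinuousMap.restrict B ⟨f, hf⟩‖ :=
      ContinuousMap.norm_coe_le_norm _ _
    have h2 : ((gg : C(B,ℝ)) - ContinuousMap.restrict B ⟨f, hf⟩) ⟨y, hy⟩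
        = (gg : C(B,ℝ)) ⟨y, hy⟩ - f y := by
      simp [ContinuousMap.restrict]
    rw [h2, Real.norm_eq_abs] at h1
    rw [abs_sub_comm]
    linarith [hgg, h1]
  have hterm : ∀ i : Fin s,
      |coef i * Real.exp (∑ l, w i l * y l)
        - coef i * ∑ p : Fin (mm i), cc i p * max ((∑ l, w i l * y l) * aa i p + bb i p) 0|
      ≤ |coef i| * δ := by
    intro i
    rw [← mul_sub, abs_mul]
    apply mul_le_mul_of_nonneg_left _ (abs_nonneg _)
    exact le_of_lt (hnet i (∑ l, w i l * y l) (hinbound i y hy))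
  have hgap : |(gg : C(B,ℝ)) ⟨y, hy⟩ - ∑ i : Fin s, coef i *
      ∑ p : Fin (mm i), cc i p * max ((∑ l, w i l * y l) * aa i p + bb i p) 0|
      ≤ (∑ i, |coef i|) * δ := by
    rw [hggy ⟨y, hy⟩]
    simp only
    rw [← Finset.sum_sub_distrib]
    calc |∑ i : Fin s, (coef i * Real.exp (∑ l, w i l * y l)
            - coef i * ∑ p : Fin (mm i), cc i p * max ((∑ l, w i l * y l) * aa i p + bb i p) 0)|
        ≤ ∑ i : Fin s, |coef i * Real.exp (∑ l, w i l * y l)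
            - coef i * ∑ p : Fin (mm i), cc i p * max ((∑ l, w i l * y l) * aa i p + bb i p) 0| :=
          Finset.abs_sum_le_sum_abs _ _
      _ ≤ ∑ i : Fin s, |coef i| * δ := Finset.sum_le_sum (fun i _ => hterm i)
      _ = (∑ i, |coef i|) * δ := by rw [Finset.sum_mul]
  have hδbound : (∑ i, |coef i|) * δ < ε/2 := by
    rw [hδdef]
    rw [div_eq_mul_inv]
    have h1 : (∑ i, |coef i|) < (∑ i, |coef i|) + 1 := by linarith
    calc (∑ i, |coef i|) * (ε * (2 * ((∑ i, |coef i|) + 1))⁻¹)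
        < ((∑ i, |coef i|) + 1) * (ε * (2 * ((∑ i, |coef i|) + 1))⁻¹) := by
          apply mul_lt_mul_of_pos_right h1
          positivity
      _ = ε/2 := by field_simp
  calc |f y - ∑ i : Fin s, coef i *
          ∑ p : Fin (mm i), cc i p * max ((∑ l, w i l * y l) * aa i p + bb i p) 0|
      ≤ |f y - (gg : C(B,ℝ)) ⟨y, hy⟩| + |(gg : C(B,ℝ)) ⟨y, hy⟩ - ∑ i : Fin s, coef i *
          ∑ p : Fin (mm i), cc i p * max ((∑ l, w i l * y l) * aa i p + bb i p) 0| :=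
        abs_sub_le _ _ _
    _ ≤ ε/2 + (∑ i, |coef i|) * δ := add_le_add hptg hgap
    _ < ε := by linarith
lemma netFamily (n : ℕ) (gg : Fin n → ℝ → ℝ) (hg : ∀ k, Continuous (gg k))
    (R ε : ℝ) (hR : 0 < R) (hε : 0 < ε) :
    ∃ (m : ℕ) (a b : Fin m → ℝ) (C : Matrix (Fin n) (Fin m) ℝ),
      ∀ ℓ t, |t| ≤ R → |gg ℓ t - ∑ p, C ℓ p * max (t * a p + b p) 0| < ε := by
  classical
  choose mm aa bb cc hcc using fun k => net1d (gg k) (hg k) R ε hR hε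
  set e := (Fintype.equivFin (Σ k : Fin n, Fin (mm k))).symm with he
  refine ⟨Fintype.card (Σ k : Fin n, Fin (mm k)),
    fun p => aa (e p).1 (e p).2, fun p => bb (e p).1 (e p).2,
    Matrix.of (fun ℓ p => if (e p).1 = ℓ then cc (e p).1 (e p).2 else 0),
    fun ℓ t ht => ?_⟩
  have h1 : ∑ p, (Matrix.of (fun ℓ p => if (e p).1 = ℓ then cc (e p).1 (e p).2 else 0)) ℓ p
        * max (t * aa (e p).1 (e p).2 + bb (e p).1 (e p).2) 0
      = ∑ q : Σ k : Fin n, Fin (mm k),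
        (if q.1 = ℓ then cc q.1 q.2 else 0) * max (t * aa q.1 q.2 + bb q.1 q.2) 0 :=
    Equiv.sum_comp e (fun q : Σ k : Fin n, Fin (mm k) =>
      (if q.1 = ℓ then cc q.1 q.2 else 0) * max (t * aa q.1 q.2 + bb q.1 q.2) 0)
  have h2 : ∑ q : Σ k : Fin n, Fin (mm k),
        (if q.1 = ℓ then cc q.1 q.2 else 0) * max (t * aa q.1 q.2 + bb q.1 q.2) 0
      = ∑ p, cc ℓ p * max (t * aa ℓ p + bb ℓ p) 0 := by
    rw [← Finset.univ_sigma_univ, Finset.sum_sigma]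
    have h3 : ∀ k : Fin n, ∑ p : Fin (mm k),
        (if k = ℓ then cc k p else 0) * max (t * aa k p + bb k p) 0
        = if k = ℓ then ∑ p : Fin (mm k), cc k p * max (t * aa k p + bb k p) 0 else 0 := by
      intro k
      by_cases hk : k = ℓ
      · simp [hk]
      · simp [hk]
    rw [Finset.sum_congr rfl (fun k _ => h3 k)]
    rw [Finset.sum_ite_eq' Finset.univ ℓ
      (fun k => ∑ p : Fin (mm k), cc k p * max (t * aa k p + bb k p) 0)]
    simp
  rw [h1, h2]
  exact hcc ℓ t ht
/-- universal approximation of `Sₙ`-equivariant maps by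
`Sₙ`-equivariant ReLU networks.  For `n ≥ 2`, compact `Sₙ`-stable `K ⊆ ℝⁿ`,
continuous `Sₙ`-equivariant `F : K → ℝⁿ` and `ε > 0`, there are widths
`m₁, m₂`, vectors `a, b ∈ ℝ^{m₁}`, matrices `C ∈ ℝ^{n×m₁}`,
`A ∈ ℝ^{m₂×(n+1)}` and vectors `d, c ∈ ℝ^{m₂}` such that the map `G` defined by
`G(x)_i = ⟨c, ReLU (A (x_i, ∑_{j ≠ i} C ReLU (x_j a + b)) + d)⟩`
satisfies `|F(x)_i − G(x)_i| < ε` for all `x ∈ K` and all `i`, and `G` is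
`Sₙ`-equivariant. -/
theorem stmt16 (n : ℕ) (hn : 2 ≤ n) (K : Set (Fin n → ℝ)) (hK : IsCompact K)
    (hstab : ∀ σ : Equiv.Perm (Fin n), ∀ x ∈ K, (fun i => x (σ⁻¹ i)) ∈ K)
    (F : (Fin n → ℝ) → (Fin n → ℝ)) (hF : ContinuousOn F K)
    (hequiv : ∀ σ : Equiv.Perm (Fin n), ∀ x ∈ K,
      F (fun i => x (σ⁻¹ i)) = fun i => F x (σ⁻¹ i))
    (ε : ℝ) (hε : 0 < ε) :
    ∃ (m₁ m₂ : ℕ) (a b : Fin m₁ → ℝ) (C : Matrix (Fin n) (Fin m₁) ℝ)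
      (A : Matrix (Fin m₂) (Fin (n + 1)) ℝ) (d c : Fin m₂ → ℝ)
      (G : (Fin n → ℝ) → (Fin n → ℝ)),
      (∀ (x : Fin n → ℝ) (i : Fin n), G x i =
        ∑ k : Fin m₂, c k *
          max ((A.mulVec (Fin.cons (x i) (∑ j ∈ Finset.univ.erase i,
            C.mulVec (fun p => max (x j * a p + b p) 0))) + d) k) 0) ∧
      (∀ x ∈ K, ∀ i : Fin n, |F x i - G x i| < ε) ∧
      (∀ (σ : Equiv.Perm (Fin n)) (x : Fin n → ℝ),
        G (fun i => x (σ⁻¹ i)) = fun i => G x (σ⁻¹ i)) := by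
  classical
  obtain ⟨g, hgcont, hgfac⟩ := factor n hn K hK hstab F hF hequiv
  -- bound on K
  obtain ⟨r, hr⟩ := hK.isBounded.subset_closedBall 0
  set R : ℝ := max r 0 + 1 with hRdef
  have hRpos : 0 < R := by positivity
  have hR1 : 1 ≤ R := by rw [hRdef]; have := le_max_right r (0:ℝ); linarith
  have hxR : ∀ x ∈ K, ∀ j, |x j| ≤ R := by
    intro x hx j
    have h1 : dist x 0 ≤ r := by simpa [Metric.mem_closedBall] using hr hx
    have h2 : dist (x j) 0 ≤ dist x 0 := dist_le_pi_dist x 0 j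
    have h3 : |x j| = dist (x j) 0 := by simp [Real.dist_eq]
    rw [h3, hRdef]
    have := le_max_left r (0:ℝ)
    linarith
  have hRn1 : 1 ≤ R^n := one_le_pow₀ hR1
  -- box for the outer net
  set R₂ : ℝ := (n+1) * R^n + 1 with hR₂def
  have hnR : (1:ℝ) ≤ n := by exact_mod_cast Nat.one_le_iff_ne_zero.mpr (by omega)
  have hR₂pos : 0 < R₂ := by rw [hR₂def]; nlinarith
  set B₂ : Set (Fin (n+1) → ℝ) := Set.pi Set.univ (fun _ => Set.Icc (-R₂) R₂) with hB₂def
  have hB₂comp : IsCompact B₂ := isCompact_univ_pi (fun _ => isCompact_Icc)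
  -- uniform continuity of g on the box
  have huc := hB₂comp.uniformContinuousOn_of_continuous hgcont.continuousOn
  rw [Metric.uniformContinuousOn_iff] at huc
  obtain ⟨δ₂, hδ₂0, hδ₂⟩ := huc (ε/2) (by linarith)
  -- inner nets
  set δ₁ : ℝ := min (δ₂ / (2*(n+1))) (1/(n+1)) with hδ₁def
  have hδ₁pos : 0 < δ₁ := by
    rw [hδ₁def]
    apply lt_min
    · positivity
    · positivity
  have hδ₁a : (n:ℝ) * δ₁ < δ₂ := by
    have h1 : δ₁ ≤ δ₂ / (2*(n+1)) := min_le_left _ _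
    have h2 : (n:ℝ) * δ₁ ≤ (n:ℝ) * (δ₂ / (2*(n+1))) :=
      mul_le_mul_of_nonneg_left h1 (by positivity)
    have h3 : (n:ℝ) * (δ₂ / (2*((n:ℝ)+1))) < δ₂ := by
      have hlt : (n:ℝ) < 2*((n:ℝ)+1) := by linarith
      have h4 : ((n:ℝ) / (2*((n:ℝ)+1))) < 1 := by
        rw [div_lt_one (by positivity)]
        exact hlt
      calc (n:ℝ) * (δ₂ / (2*((n:ℝ)+1))) = ((n:ℝ) / (2*((n:ℝ)+1))) * δ₂ := by
            rw [div_eq_mul_inv, div_eq_mul_inv]; ring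
        _ < 1 * δ₂ := mul_lt_mul_of_pos_right h4 hδ₂0
        _ = δ₂ := one_mul _
    linarith
  have hδ₁b : (n:ℝ) * δ₁ ≤ 1 := by
    have h1 : δ₁ ≤ 1/(n+1) := min_le_right _ _
    have h2 : (n:ℝ) * δ₁ ≤ (n:ℝ) * (1/(n+1)) := mul_le_mul_of_nonneg_left h1 (by positivity)
    have h3 : (n:ℝ) * (1/(n+1)) ≤ 1 := by
      rw [mul_one_div, div_le_one (by positivity)]
      linarith
    linarith
  obtain ⟨m₁, a, b, C, hC⟩ := netFamily n (fun ℓ t => t^(ℓ.1+1))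
    (fun ℓ => continuous_pow (ℓ.1+1)) R δ₁ hRpos hδ₁pos
  -- outer net
  obtain ⟨m₂, A, d, c, hA⟩ := netMulti (n+1) g hgcont B₂ hB₂comp (ε/2) (by linarith)
  -- the network
  set φ : ℝ → (Fin n → ℝ) := fun t => C.mulVec (fun p => max (t * a p + b p) 0) with hφdef
  set G : (Fin n → ℝ) → (Fin n → ℝ) := fun x i =>
    ∑ k : Fin m₂, c k *
      max ((A.mulVec (Fin.cons (x i) (∑ j ∈ Finset.univ.erase i, φ (x j))) + d) k) 0
    with hGdef
  have hGform : ∀ (x : Fin n → ℝ) (i : Fin n), G x i =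
      ∑ k : Fin m₂, c k *
        max ((A.mulVec (Fin.cons (x i) (∑ j ∈ Finset.univ.erase i,
          C.mulVec (fun p => max (x j * a p + b p) 0))) + d) k) 0 := fun x i => rfl
  refine ⟨m₁, m₂, a, b, C, A, d, c, G, hGform, ?_, ?_⟩
  · -- approximation on K
    intro x hx i
    set T : Fin n → ℝ := ∑ j ∈ Finset.univ.erase i, fun ℓ : Fin n => x j ^ (ℓ.1+1) with hTdef
    set S : Fin n → ℝ := ∑ j ∈ Finset.univ.erase i, φ (x j) with hSdef
    have hcard : (Finset.univ.erase i).card ≤ n := by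
      calc (Finset.univ.erase i).card ≤ Finset.univ.card := Finset.card_erase_le ..
        _ = n := by simp
    have hTval : ∀ ℓ : Fin n, T ℓ = ∑ j ∈ Finset.univ.erase i, x j ^ (ℓ.1+1) := by
      intro ℓ
      rw [hTdef, Finset.sum_apply]
    have hSval : ∀ ℓ : Fin n, S ℓ = ∑ j ∈ Finset.univ.erase i,
        ∑ p, C ℓ p * max (x j * a p + b p) 0 := by
      intro ℓ
      rw [hSdef, Finset.sum_apply]
      apply Finset.sum_congr rfl
      intro j _
      simp [hφdef, Matrix.mulVec, dotProduct]
    have hpow : ∀ (j : Fin n) (ℓ : Fin n), |x j ^ (ℓ.1+1)| ≤ R^n := by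
      intro j ℓ
      rw [abs_pow]
      calc |x j| ^ (ℓ.1+1) ≤ R ^ (ℓ.1+1) :=
          pow_le_pow_left₀ (abs_nonneg _) (hxR x hx j) _
        _ ≤ R^n := pow_le_pow_right₀ hR1 ℓ.2
    have hTbound : ∀ ℓ : Fin n, |T ℓ| ≤ (n:ℝ) * R^n := by
      intro ℓ
      rw [hTval]
      calc |∑ j ∈ Finset.univ.erase i, x j ^ (ℓ.1+1)|
          ≤ ∑ j ∈ Finset.univ.erase i, |x j ^ (ℓ.1+1)| := Finset.abs_sum_le_sum_abs _ _
        _ ≤ ∑ _j ∈ Finset.univ.erase i, R^n := Finset.sum_le_sum (fun j _ => hpow j _)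
        _ = (Finset.univ.erase i).card * R^n := by rw [Finset.sum_const, nsmul_eq_mul]
        _ ≤ (n:ℝ) * R^n := by
            apply mul_le_mul_of_nonneg_right _ (by positivity)
            exact_mod_cast hcard
    have hST : ∀ ℓ : Fin n, |S ℓ - T ℓ| ≤ (n:ℝ) * δ₁ := by
      intro ℓ
      rw [hSval, hTval, ← Finset.sum_sub_distrib]
      calc |∑ j ∈ Finset.univ.erase i,
            ((∑ p, C ℓ p * max (x j * a p + b p) 0) - x j ^ (ℓ.1+1))|
          ≤ ∑ j ∈ Finset.univ.erase i,
            |(∑ p, C ℓ p * max (x j * a p + b p) 0) - x j ^ (ℓ.1+1)| :=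
            Finset.abs_sum_le_sum_abs _ _
        _ ≤ ∑ _j ∈ Finset.univ.erase i, δ₁ := by
            apply Finset.sum_le_sum
            intro j _
            rw [abs_sub_comm]
            exact le_of_lt (hC ℓ (x j) (hxR x hx j))
        _ = (Finset.univ.erase i).card * δ₁ := by rw [Finset.sum_const, nsmul_eq_mul]
        _ ≤ (n:ℝ) * δ₁ := by
            apply mul_le_mul_of_nonneg_right _ (le_of_lt hδ₁pos)
            exact_mod_cast hcard
    set z : Fin (n+1) → ℝ := Fin.cons (x i) T with hzdef
    set zh : Fin (n+1) → ℝ := Fin.cons (x i) S with hzhdef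
    have hzB : z ∈ B₂ := by
      rw [hB₂def, Set.mem_pi]
      intro l _
      rw [Set.mem_Icc, hzdef]
      refine Fin.cases ?_ ?_ l
      · rw [Fin.cons_zero]
        have h1 : |x i| ≤ R := hxR x hx i
        have h2 : R ≤ R₂ := by
          rw [hR₂def]
          have : R ≤ R^n := le_self_pow₀ hR1 (by omega)
          nlinarith
        constructor
        · linarith [abs_le.mp h1]
        · linarith [abs_le.mp h1]
      · intro ℓ
        rw [Fin.cons_succ]
        have h1 := hTbound ℓ
        have h2 : (n:ℝ) * R^n ≤ R₂ := by rw [hR₂def]; nlinarith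
        constructor
        · linarith [abs_le.mp h1]
        · linarith [abs_le.mp h1]
    have hzhB : zh ∈ B₂ := by
      rw [hB₂def, Set.mem_pi]
      intro l _
      rw [Set.mem_Icc, hzhdef]
      refine Fin.cases ?_ ?_ l
      · rw [Fin.cons_zero]
        have h1 : |x i| ≤ R := hxR x hx i
        have h2 : R ≤ R₂ := by
          rw [hR₂def]
          have : R ≤ R^n := le_self_pow₀ hR1 (by omega)
          nlinarith
        constructor
        · linarith [abs_le.mp h1]
        · linarith [abs_le.mp h1]
      · intro ℓ
        rw [Fin.cons_succ]
        have h1 : |S ℓ| ≤ (n:ℝ) * R^n + 1 := by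
          calc |S ℓ| ≤ |T ℓ| + |S ℓ - T ℓ| := by
                have := abs_sub_abs_le_abs_sub (S ℓ) (T ℓ)
                have h2 := abs_sub (S ℓ) (T ℓ)
                linarith [abs_sub_le (S ℓ) (T ℓ) 0, abs_sub_comm (S ℓ) (T ℓ)]
            _ ≤ (n:ℝ) * R^n + (n:ℝ) * δ₁ := add_le_add (hTbound ℓ) (hST ℓ)
            _ ≤ (n:ℝ) * R^n + 1 := by linarith
        have h2 : (n:ℝ) * R^n + 1 ≤ R₂ := by rw [hR₂def]; nlinarith
        constructor
        · linarith [abs_le.mp h1]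
        · linarith [abs_le.mp h1]
    have hdist : dist z zh < δ₂ := by
      rw [dist_pi_lt_iff hδ₂0]
      intro l
      refine Fin.cases ?_ ?_ l
      · rw [hzdef, hzhdef]
        simp only [Fin.cons_zero]
        rw [dist_self (x i)]
        exact hδ₂0
      · intro ℓ
        rw [hzdef, hzhdef]
        simp only [Fin.cons_succ]
        rw [Real.dist_eq, abs_sub_comm]
        calc |S ℓ - T ℓ| ≤ (n:ℝ) * δ₁ := hST ℓ
          _ < δ₂ := hδ₁a
    have hgz : g z = F x i := hgfac x hx i
    have hg2 : |g z - g zh| < ε/2 := by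
      have := hδ₂ z hzB zh hzhB hdist
      rwa [Real.dist_eq] at this
    have hg3 : |g zh - G x i| < ε/2 := by
      have := hA zh hzhB
      have hGzh : G x i = ∑ k : Fin m₂, c k * max ((A.mulVec zh + d) k) 0 := rfl
      rw [hGzh]
      exact this
    calc |F x i - G x i| = |(g z - g zh) + (g zh - G x i)| := by rw [← hgz]; ring_nf
      _ ≤ |g z - g zh| + |g zh - G x i| := abs_add_le _ _
      _ < ε/2 + ε/2 := add_lt_add hg2 hg3
      _ = ε := by ring
  · -- equivariance
    intro σ x
    funext i
    rw [hGdef]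
    simp only
    have hs : ∑ j ∈ Finset.univ.erase i, φ (x (σ⁻¹ j))
        = ∑ j ∈ Finset.univ.erase (σ⁻¹ i), φ (x j) := by
      apply Finset.sum_nbij' (fun j => σ⁻¹ j) (fun j => σ j)
      · intro j hj
        simp only [Finset.mem_erase, Finset.mem_univ, and_true] at hj ⊢
        intro hc
        exact hj (σ⁻¹.injective hc)
      · intro j hj
        simp only [Finset.mem_erase, Finset.mem_univ, and_true] at hj ⊢
        intro hc
        apply hj
        rw [← hc]
        simp
      · intro j _; simp
      · intro j _; simp
      · intro j _; rfl
    rw [hs]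
end
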